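/- arXiv:2411.17889 — 9 statements merged into one kernel-verified Lean document; each statement's English description precedes it below -/
import Mathlib

section
/- Let L be a countable first-order language and let U be a countable ultrahomogeneous L-structure. Suppose (M_n)_{n∈ℕ} is a directed system of L-structures with coherent embeddings u_m^n : M_m → M_n for m ≤ n (so u_n^n = id and u_n^k ∘ u_m^n = u_m^k for m ≤ n ≤ k) such that every M_n is isomorphic to U. Then the direct limit of the system (M_n, u_m^n) is isomorphic to U. -/
open FirstOrder Language Cardinal CategoryTheory

open FirstOrder.Language Set Substructure

/-- Extension pairs are preserved by isomorphism of the codomain. -/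
lemma extPair_congr {L : FirstOrder.Language} {M N N' : Type*}
    [L.Structure M] [L.Structure N] [L.Structure N'] (e : N ≃[L] N')
    (h : L.IsExtensionPair M N) : L.IsExtensionPair M N' := by
  rw [isExtensionPair_iff_exists_embedding_closure_singleton_sup] at h ⊢
  intro S hS g m
  obtain ⟨g', hg'⟩ := h S hS (e.symm.toEmbedding.comp g) m
  refine ⟨e.toEmbedding.comp g', ?_⟩
  ext x
  have := congrFun (congrArg (fun (h : S ↪[L] N) => (h : S → N)) hg') x
  simp only [Embedding.comp_apply] at this ⊢
  rw [← this]
  simp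

/-- The direct limit of a directed sequence `(M_n)_{n ∈ ℕ}` of structures, each
isomorphic to a countable ultrahomogeneous structure `U` in a countable language, with coherent
embeddings, is again isomorphic to `U`. -/
theorem statement2 (L : FirstOrder.Language.{0, 0}) [Countable L.Symbols]
    (U : Type) [L.Structure U] [Countable U]
    (hU : L.IsUltrahomogeneous U)
    (G : ℕ → Type) [∀ n, L.Structure (G n)]
    (f : ∀ m n : ℕ, m ≤ n → G m ↪[L] G n)
    [DirectedSystem G fun m n h => f m n h]
    (hiso : ∀ n, Nonempty (G n ≃[L] U)) :
    Nonempty (FirstOrder.Language.DirectLimit G f ≃[L] U) := by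
  classical
  have hcount : ∀ n, Countable (G n) := fun n =>
    Countable.of_equiv U ((hiso n).some.toEquiv).symm
  -- the direct limit is countably generated
  have D_cg : Structure.CG L (FirstOrder.Language.DirectLimit G f) :=
    DirectLimit.cg f (fun n => Structure.cg_of_countable)
  have U_cg : Structure.CG L U := Structure.cg_of_countable
  -- every finitely generated substructure of the limit lies in the range of some `of n`
  have hrange : ∀ S : L.Substructure (FirstOrder.Language.DirectLimit G f), S.FG →
      ∃ i, S ≤ (DirectLimit.of L ℕ G f i).toHom.range := by
    intro S hS
    obtain ⟨i, T, hT⟩ := DirectLimit.exists_fg_substructure_in_Sigma S hS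
    refine ⟨i, ?_⟩
    rw [← hT, Hom.range_eq_map]
    exact Substructure.monotone_map le_top
  -- key computation: `of i` applied to `equivRange.symm` gives back the element
  have of_symm : ∀ (i : ℕ) (y : (DirectLimit.of L ℕ G f i).toHom.range),
      DirectLimit.of L ℕ G f i ((DirectLimit.of L ℕ G f i).equivRange.symm y) = (y : _) := by
    intro i y
    have h := Embedding.equivRange_apply (DirectLimit.of L ℕ G f i)
      ((DirectLimit.of L ℕ G f i).equivRange.symm y)
    rw [← h, (DirectLimit.of L ℕ G f i).equivRange.apply_symm_apply]
  -- every finitely generated substructure of the limit embeds in `U`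
  have hembU : ∀ S : L.Substructure (FirstOrder.Language.DirectLimit G f), S.FG → Nonempty (S ↪[L] U) := by
    intro S hS
    obtain ⟨i, hle⟩ := hrange S hS
    exact ⟨((hiso i).some.toEmbedding.comp
      ((DirectLimit.of L ℕ G f i).equivRange.symm.toEmbedding.comp
        (Substructure.inclusion hle)))⟩
  -- `U` and `U` form an extension pair
  have hUU : L.IsExtensionPair U U :=
    (isUltrahomogeneous_iff_IsExtensionPair Structure.cg_of_countable).1 hU
  -- hence `U` and `G i` form an extension pair
  have hUG : ∀ i, L.IsExtensionPair U (G i) := fun i =>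
    extPair_congr (hiso i).some.symm hUU
  -- extension pair from the limit to `U`
  have extDU : L.IsExtensionPair (FirstOrder.Language.DirectLimit G f) U := by
    intro ⟨g, g_FG⟩ m
    let S := g.dom ⊔ closure L {m}
    have S_FG : S.FG := g_FG.sup (Substructure.fg_closure_singleton _)
    haveI nonempty_S_U : Nonempty (S ↪[L] U) := hembU S S_FG
    let ⟨g', g'_eq⟩ := hU.extend_embedding (g.dom.fg_iff_structure_fg.1 g_FG)
      ((subtype g.cod).comp g.toEquiv.toEmbedding) (inclusion (le_sup_left : _ ≤ S))
    refine ⟨⟨⟨S, g'.toHom.range, g'.equivRange⟩, S_FG⟩,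
      subset_closure.trans (le_sup_right : _ ≤ S) (mem_singleton m), ⟨le_sup_left, ?_⟩⟩
    ext
    simp [Subtype.mk_le_mk, PartialEquiv.le_def, g'_eq]
  -- extension pair from `U` to the limit
  have extUD : L.IsExtensionPair U (FirstOrder.Language.DirectLimit G f) := by
    rw [isExtensionPair_iff_exists_embedding_closure_singleton_sup]
    intro S hS g m
    have hgr : (g.toHom.range).FG := ((Substructure.fg_iff_structure_fg S).1 hS).range g.toHom
    obtain ⟨i, hle⟩ := hrange _ hgr
    let g₁ : S ↪[L] G i :=
      (DirectLimit.of L ℕ G f i).equivRange.symm.toEmbedding.comp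
        ((Substructure.inclusion hle).comp g.equivRange.toEmbedding)
    have hg₁ : ∀ x : S, DirectLimit.of L ℕ G f i (g₁ x) = g x := by
      intro x
      simp only [g₁, Embedding.comp_apply, Equiv.coe_toEmbedding,
        FirstOrder.Language.Equiv.coe_toEmbedding]
      rw [of_symm]
      rfl
    obtain ⟨g₂, hg₂⟩ :=
      (isExtensionPair_iff_exists_embedding_closure_singleton_sup.1 (hUG i)) S hS g₁ m
    refine ⟨(DirectLimit.of L ℕ G f i).comp g₂, ?_⟩
    ext x
    have := congrFun (congrArg (fun (h : S ↪[L] G i) => (h : S → G i)) hg₂) x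
    simp only [Embedding.comp_apply] at this ⊢
    rw [← this, hg₁]
  -- an initial finitely generated partial equivalence
  obtain ⟨emb⟩ := hembU ⊥ Substructure.fg_bot
  let g0 : L.FGEquiv (FirstOrder.Language.DirectLimit G f) U :=
    ⟨⟨⊥, emb.toHom.range, emb.equivRange⟩, Substructure.fg_bot⟩
  obtain ⟨e, -⟩ := equiv_between_cg D_cg U_cg g0 extDU extUD
  exact ⟨e⟩
end

section
/- Let L be a finite relational first-order language (L has no function or constant symbols and only finitely many relation symbols). Let I be a set, let p be an ultrafilter on I, and let (M_i)_{i∈I} be a family of ultrahomogeneous L-structures. Then the ultraproduct (∏_{i∈I} M_i)/p is ultrahomogeneous. -/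
open FirstOrder Language

/-!
Choose representatives of the elements of a finite substructure `S` of the ultraproduct and of
their images under an embedding `f`. Since `S` and the language are finite, the finitely many
atomic facts (equalities and relations) that `S` and `f(S)` share hold in `p`-almost every
coordinate by Łoś. In each such coordinate the two finite tuples have the same
atomic type, so by ultrahomogeneity of `Mᵢ` some automorphism `gᵢ` carries one to the other; the
automorphism of the ultraproduct induced by the `gᵢ` extends `f`.
-/

theorem Ultrafilter.eventually_iff_iff {α : Type*} {f : Ultrafilter α} {P Q : α → Prop} :
    (∀ᶠ x in f, P x ↔ Q x) ↔ ((∀ᶠ x in f, P x) ↔ ∀ᶠ x in f, Q x) := by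
  simp only [iff_iff_implies_and_implies, Filter.eventually_and, Ultrafilter.eventually_imp]

theorem Filter.Product.coe_eq_coe_iff {α : Type*} {l : Filter α} {ε : α → Type*}
    {a b : ∀ i, ε i} : (a : l.Product ε) = (b : l.Product ε) ↔ ∀ᶠ i in l, a i = b i :=
  Quotient.eq''

namespace FirstOrder.Language

open Structure

section SameAtomicType

variable (L : Language) {S A B : Type*} [L.Structure A] [L.Structure B]

/-- Only atoms `x = y` and `r x₁ … xₙ` are compared, so this is the atomic type only when `L` is
relational. -/
def SameAtomicType (u : S → A) (w : S → B) : Prop :=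
  (∀ x y, u x = u y ↔ w x = w y) ∧
    ∀ {n} (r : L.Relations n) (v : Fin n → S), RelMap r (u ∘ v) ↔ RelMap r (w ∘ v)

variable {L}

theorem Embedding.sameAtomicType {N : Type*} [L.Structure N] (f : N ↪[L] A) (g : N ↪[L] B) :
    L.SameAtomicType f g :=
  ⟨fun _ _ => f.injective.eq_iff.trans g.injective.eq_iff.symm,
    fun r v => (f.map_rel r v).trans (g.map_rel r v).symm⟩

theorem SameAtomicType.exists_embedding [L.IsRelational] {u : S → A} {w : S → B}
    (h : L.SameAtomicType u w) :
    ∃ e : Substructure.closure L (Set.range u) ↪[L] B,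
      ∀ x, e ⟨u x, Substructure.subset_closure (Set.mem_range_self x)⟩ = w x := by
  have hmem (t : Substructure.closure L (Set.range u)) : ∃ x, u x = t :=
    (Substructure.mem_closure_iff_of_isRelational L (Set.range u) t).1 t.2
  choose idx hidx using hmem
  refine ⟨⟨⟨fun t => w (idx t), fun t t' htt' => ?_⟩, fun f => isEmptyElim f, fun r v => ?_⟩,
    fun x => (h.1 _ _).1 (hidx _)⟩
  · exact Subtype.ext (by rw [← hidx t, ← hidx t', (h.1 _ _).2 htt'])
  · have hv : u ∘ idx ∘ v = Subtype.val ∘ v := funext fun k => hidx (v k)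
    change RelMap r (w ∘ idx ∘ v) ↔ RelMap r v
    rw [← h.2 r (idx ∘ v), hv]
    exact (Substructure.closure L (Set.range u)).subtype.map_rel r v

theorem IsUltrahomogeneous.exists_equiv_comp_eq [L.IsRelational] (hA : L.IsUltrahomogeneous A)
    [Finite S] {u w : S → A} (h : L.SameAtomicType u w) : ∃ g : A ≃[L] A, g ∘ u = w := by
  obtain ⟨e, he⟩ := h.exists_embedding
  obtain ⟨g, rfl⟩ := hA _ (Substructure.fg_closure (Set.finite_range u)) e
  exact ⟨g, funext he⟩

end SameAtomicType

namespace Ultraproduct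

variable {L : Language} {α : Type*} {u : Ultrafilter α} {M N : α → Type*}
  [∀ i, L.Structure (M i)] [∀ i, L.Structure (N i)]

theorem relMap_coe {n : ℕ} (r : L.Relations n) (x : Fin n → ∀ i, M i) :
    (RelMap r fun k => (x k : (u : Filter α).Product M)) ↔ ∀ᶠ i in u, RelMap r fun k => x k i :=
  relMap_quotient_mk' _ r x

def mapEquiv (g : ∀ i, M i ≃[L] N i) : (u : Filter α).Product M ≃[L] (u : Filter α).Product N where
  toEquiv := Quotient.congr (Equiv.piCongrRight fun i => (g i).toEquiv) fun a b => by
    change (∀ᶠ i in u, a i = b i) ↔ ∀ᶠ i in u, g i (a i) = g i (b i)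
    simp only [EmbeddingLike.apply_eq_iff_eq]
  map_fun' f x := by
    obtain ⟨c, rfl⟩ : ∃ c : Fin _ → ∀ i, M i, (fun k => (c k : (u : Filter α).Product M)) = x :=
      ⟨fun k => (x k).out, funext fun k => Quotient.out_eq' _⟩
    change Quotient.congr _ _ (funMap f fun k => (c k : (u : Filter α).Product M)) =
      funMap f fun k => ((fun i => g i (c k i) : ∀ i, N i) : (u : Filter α).Product N)
    rw [funMap_cast, funMap_cast]
    exact Quotient.sound (.of_forall fun i => (g i).map_fun f _)
  map_rel' r x := by
    obtain ⟨c, rfl⟩ : ∃ c : Fin _ → ∀ i, M i, (fun k => (c k : (u : Filter α).Product M)) = x :=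
      ⟨fun k => (x k).out, funext fun k => Quotient.out_eq' _⟩
    exact (relMap_coe r _).trans <|
      (Filter.eventually_congr (.of_forall fun i => (g i).map_rel r _)).trans (relMap_coe r c).symm

theorem mapEquiv_coe (g : ∀ i, M i ≃[L] N i) (a : ∀ i, M i) :
    mapEquiv (u := u) g a = ((fun i => g i (a i) : ∀ i, N i) : (u : Filter α).Product N) :=
  rfl

theorem eventually_sameAtomicType {S : Type*} [Finite S] [Finite (Σ n, L.Relations n)]
    {a b : S → ∀ i, M i}
    (h : L.SameAtomicType (fun x => (a x : (u : Filter α).Product M))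
      (fun x => (b x : (u : Filter α).Product M))) :
    ∀ᶠ i in u, L.SameAtomicType (fun x => a x i) (fun x => b x i) := by
  have heq : ∀ᶠ i in u, ∀ x y, a x i = a y i ↔ b x i = b y i := by
    simp only [Filter.eventually_all, Ultrafilter.eventually_iff_iff]
    exact fun x y => by simpa only [Filter.Product.coe_eq_coe_iff] using h.1 x y
  have hrel : ∀ᶠ i in u, ∀ r : Σ n, L.Relations n, ∀ v : Fin r.1 → S,
      RelMap r.2 (fun k => a (v k) i) ↔ RelMap r.2 (fun k => b (v k) i) := by
    simp only [Filter.eventually_all, Ultrafilter.eventually_iff_iff]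
    exact fun r v => by simpa only [Function.comp_def, relMap_coe] using h.2 r.2 v
  filter_upwards [heq, hrel] with i hi_eq hi_rel
  exact ⟨hi_eq, fun r v => hi_rel ⟨_, r⟩ v⟩

end Ultraproduct

end FirstOrder.Language

/-- In a finite relational language, any ultraproduct of ultrahomogeneous
structures is ultrahomogeneous. -/
theorem statement5 (L : FirstOrder.Language.{0, 0}) [L.IsRelational] [Finite L.Symbols]
    {I : Type} (p : Ultrafilter I) (M : I → Type) [∀ i, L.Structure (M i)]
    (hM : ∀ i, L.IsUltrahomogeneous (M i)) :
    L.IsUltrahomogeneous ((p : Filter I).Product M) := by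
  intro S hS f
  have : Finite S := Substructure.fg_iff_finite.1 hS
  have : Finite (Σ n, L.Relations n) := Finite.sum_right (Σ n, L.Functions n)
  obtain ⟨a, ha⟩ : ∃ a : S → ∀ i, M i, (fun x => (a x : (p : Filter I).Product M)) = S.subtype :=
    ⟨fun x => (S.subtype x).out, funext fun x => Quotient.out_eq' _⟩
  obtain ⟨b, hb⟩ : ∃ b : S → ∀ i, M i, (fun x => (b x : (p : Filter I).Product M)) = f :=
    ⟨fun x => (f x).out, funext fun x => Quotient.out_eq' _⟩
  have hab : ∀ᶠ i in p, L.SameAtomicType (fun x => a x i) (fun x => b x i) :=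
    Ultraproduct.eventually_sameAtomicType (by rw [ha, hb]; exact S.subtype.sameAtomicType f)
  have hg (i : I) : ∃ g : M i ≃[L] M i, L.SameAtomicType (fun x => a x i) (fun x => b x i) →
      g ∘ (fun x => a x i) = fun x => b x i := by
    by_cases hi : L.SameAtomicType (fun x => a x i) (fun x => b x i)
    · exact ((hM i).exists_equiv_comp_eq hi).imp fun _ hg _ => hg
    · exact ⟨.refl L (M i), fun h => absurd h hi⟩
  choose g hg using hg
  refine ⟨Ultraproduct.mapEquiv g, DFunLike.ext _ _ fun x => ?_⟩
  have hbx : (b x : (p : Filter I).Product M) = Ultraproduct.mapEquiv g (a x) := by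
    rw [Ultraproduct.mapEquiv_coe]
    exact Filter.Product.coe_eq_coe_iff.2 <| hab.mono fun i hi => (congrFun (hg i hi) x).symm
  exact (congrFun hb x).symm.trans (hbx.trans (congrArg _ (congrFun ha x)))
end

section
/- Let L be a countable first-order language, let F be a Fraïssé class of L-structures and let U be its Fraïssé limit. Then the following are equivalent: (1) the monoid of self-embeddings of U has the amalgamation property, i.e., for all embeddings f, g : U → U there exist embeddings f', g' : U → U with f' ∘ f = g' ∘ g; (2) U is an amalgamation base in the class of countable structures with age contained in F, i.e., for all countable L-structures X, Y whose ages are contained in F and all embeddings f : U → X, g : U → Y, there exist a countable L-structure Z with age contained in F and embeddings f' : X → Z, g' : Y → Z with f' ∘ f = g' ∘ g. -/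
/-!
A countable structure whose age lies in `K` embeds into the Fraïssé limit `U` (a back-and-forth
argument run only forth, using ultrahomogeneity of `U`). For (1) ⇒ (2), embed `X` and `Y` into
`U`, amalgamate the two resulting self-embeddings of `U`, and take `Z = U`. For (2) ⇒ (1),
amalgamate `f, g : U → U` in some countable `Z` with age in `K` and embed `Z` back into `U`.
-/

open FirstOrder Language Cardinal CategoryTheory

namespace FirstOrder.Language.IsUltrahomogeneous

open Substructure

universe w

variable {L : Language} {M N : Type w} [L.Structure M] [L.Structure N]

theorem isExtensionPair_of_age_subset (hN : L.IsUltrahomogeneous N) (hMN : L.age M ⊆ L.age N) :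
    L.IsExtensionPair M N := by
  intro ⟨f, f_FG⟩ m
  let S := f.dom ⊔ closure L {m}
  have S_FG : S.FG := f_FG.sup (fg_closure_singleton _)
  have : Nonempty (S ↪[L] N) := (hMN (age.fg_substructure S_FG)).2
  obtain ⟨g, g_eq⟩ := hN.extend_embedding (f.dom.fg_iff_structure_fg.1 f_FG)
    ((subtype f.cod).comp f.toEquiv.toEmbedding) (inclusion (le_sup_left : _ ≤ S))
  refine ⟨⟨⟨S, g.toHom.range, g.equivRange⟩, S_FG⟩,
    subset_closure.trans (le_sup_right : _ ≤ S) (Set.mem_singleton m), ⟨le_sup_left, ?_⟩⟩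
  ext
  simp [S, g_eq]

theorem nonempty_embedding_of_age_subset [Countable M] (hN : L.IsUltrahomogeneous N)
    (hMN : L.age M ⊆ L.age N) :
    Nonempty (M ↪[L] N) := by
  obtain ⟨-, ⟨e⟩⟩ := hMN (age.fg_substructure (M := M) fg_bot)
  obtain ⟨f, -⟩ := embedding_from_cg Structure.cg_of_countable
    ⟨⟨⊥, e.toHom.range, e.equivRange⟩, fg_bot⟩ (hN.isExtensionPair_of_age_subset hMN)
  exact ⟨f⟩

end FirstOrder.Language.IsUltrahomogeneous

theorem statement9_general (L : FirstOrder.Language.{0, 0}) [Countable L.Symbols]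
    (K : Set (Bundled.{0} L.Structure))
    (U : Type) [L.Structure U] [Countable U]
    (hU : IsFraisseLimit K U) :
    (∀ f g : U ↪[L] U, ∃ f' g' : U ↪[L] U, f'.comp f = g'.comp g) ↔
      (∀ (X Y : Bundled.{0} L.Structure), Countable X → Countable Y →
        L.age X ⊆ K → L.age Y ⊆ K →
        ∀ (f : U ↪[L] X) (g : U ↪[L] Y),
          ∃ Z : Bundled.{0} L.Structure, Countable Z ∧ L.age Z ⊆ K ∧
            ∃ (f' : X ↪[L] Z) (g' : Y ↪[L] Z), f'.comp f = g'.comp g) := by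
  have embeds_into_U (X : Bundled.{0} L.Structure) [Countable X] (hX : L.age X ⊆ K) :
      Nonempty (X ↪[L] U) :=
    hU.ultrahomogeneous.nonempty_embedding_of_age_subset (hU.age ▸ hX)
  constructor
  · intro h X Y _ _ hXK hYK f g
    obtain ⟨iX⟩ := embeds_into_U X hXK
    obtain ⟨iY⟩ := embeds_into_U Y hYK
    obtain ⟨F, G, hFG⟩ := h (iX.comp f) (iY.comp g)
    refine ⟨⟨U, inferInstance⟩, ‹_›, hU.age.le, F.comp iX, G.comp iY, ?_⟩
    simpa only [Embedding.comp_assoc] using hFG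
  · intro h f g
    obtain ⟨Z, _, hZK, f', g', hfg⟩ :=
      h ⟨U, inferInstance⟩ ⟨U, inferInstance⟩ ‹_› ‹_› hU.age.le hU.age.le f g
    obtain ⟨j⟩ := embeds_into_U Z hZK
    exact ⟨j.comp f', j.comp g', by simp only [Embedding.comp_assoc, hfg]⟩

/-- Let `K` be a Fraïssé class in a countable language with Fraïssé limit `U`.
The monoid of self-embeddings of `U` has the amalgamation property if and only if `U` is an
amalgamation base in the class of countable structures with age contained in `K`. -/
theorem statement9 (L : FirstOrder.Language.{0, 0}) [Countable L.Symbols]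
    (K : Set (Bundled.{0} L.Structure)) [IsFraisse K]
    (U : Type) [L.Structure U] [Countable U]
    (hU : IsFraisseLimit K U) :
    (∀ f g : U ↪[L] U, ∃ f' g' : U ↪[L] U, f'.comp f = g'.comp g) ↔
      (∀ (X Y : Bundled.{0} L.Structure), Countable X → Countable Y →
        L.age X ⊆ K → L.age Y ⊆ K →
        ∀ (f : U ↪[L] X) (g : U ↪[L] Y),
          ∃ Z : Bundled.{0} L.Structure, Countable Z ∧ L.age Z ⊆ K ∧
            ∃ (f' : X ↪[L] Z) (g' : Y ↪[L] Z), f'.comp f = g'.comp g) :=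
  statement9_general L K U hU
end

section
/- Let L be a countable first-order language and let W be an ultrahomogeneous L-structure. Let X be an infinite subset of W and let H₀ be a set of automorphisms of W with |H₀| ≤ |X|. Then there exist a substructure U of W containing X with |U| = |X| and a set H of automorphisms of W with H₀ ⊆ H and |H| ≤ |X|, such that every h ∈ H maps U onto itself, and every isomorphism between finitely generated substructures of U extends to the restriction to U of some h ∈ H; in particular, U is ultrahomogeneous. -/
open FirstOrder Language Cardinal CategoryTheory

section Statement10Aux
open Set

namespace Statement10Aux

variable (L : FirstOrder.Language.{0,0}) (W : Type) [L.Structure W]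

abbrev Task := Σ n : ℕ, (Fin n → W) × (Fin n → W)

open Classical in
noncomputable def pickAut (p : Task W) : W ≃[L] W :=
  if h : ∃ g : W ≃[L] W, ∀ i, g (p.2.1 i) = p.2.2 i then h.choose
  else Language.Equiv.refl L W

theorem pickAut_spec {p : Task W} (h : ∃ g : W ≃[L] W, ∀ i, g (p.2.1 i) = p.2.2 i) :
    ∀ i, pickAut L W p (p.2.1 i) = p.2.2 i := by
  rw [pickAut, dif_pos h]; exact h.choose_spec

def taskSet (T : Set W) : Set (Task W) :=
  {p | (∀ i, p.2.1 i ∈ T) ∧ ∀ i, p.2.2 i ∈ T}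

theorem mk_taskSet_le {T : Set W} {κ : Cardinal} (hκ : ℵ₀ ≤ κ) (hT : #T ≤ κ) :
    #(taskSet W T) ≤ κ := by
  have surj : Function.Surjective (fun q : Σ n : ℕ, (Fin n → T) × (Fin n → T) =>
      (⟨⟨q.1, fun i => (q.2.1 i : W), fun i => (q.2.2 i : W)⟩,
        ⟨fun i => (q.2.1 i).2, fun i => (q.2.2 i).2⟩⟩ : taskSet W T)) := by
    rintro ⟨⟨n, x, y⟩, hx, hy⟩
    exact ⟨⟨n, fun i => ⟨x i, hx i⟩, fun i => ⟨y i, hy i⟩⟩, rfl⟩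
  refine (Cardinal.mk_le_of_surjective surj).trans ?_
  rw [Cardinal.mk_sigma]
  have h1 : ∀ n : ℕ, #(Fin n → T) ≤ κ := by
    intro n
    rw [← Cardinal.power_def]
    calc #T ^ (#(Fin n)) ≤ κ ^ (#(Fin n)) := Cardinal.power_le_power_right hT
      _ = κ ^ (n : Cardinal) := by rw [Cardinal.mk_fin]
      _ ≤ κ := by rw [Cardinal.power_natCast]; exact Cardinal.power_nat_le hκ
  refine (Cardinal.sum_le_sum _ (fun _ => κ) ?_).trans ?_
  · intro n
    show #((Fin n → T) × (Fin n → T)) ≤ κ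
    rw [Cardinal.mk_prod]; simp only [Cardinal.lift_id]
    calc #(Fin n → T) * #(Fin n → T) ≤ κ * κ := mul_le_mul' (h1 n) (h1 n)
      _ = κ := Cardinal.mul_eq_self hκ
  · rw [Cardinal.sum_const', Cardinal.mk_nat]
    exact le_of_eq (Cardinal.aleph0_mul_eq hκ)

theorem mk_closure_le [Countable L.Symbols] {s : Set W} {κ : Cardinal} (hκ : ℵ₀ ≤ κ)
    (hs : #s ≤ κ) : #(Substructure.closure L s) ≤ κ := by
  have h := Substructure.lift_card_closure_le (L := L) (M := W) (s := s)
  simp only [Cardinal.lift_id] at h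
  refine h.trans (max_le hκ ?_)
  have hfun : #(Σ i, L.Functions i) ≤ ℵ₀ := Cardinal.mk_le_aleph0
  exact (add_le_add hs hfun).trans (by rw [Cardinal.add_eq_max hκ]; exact max_le le_rfl hκ)

/-- The recursive closing-off construction. -/
noncomputable def SH (X : Set W) (H₀ : Set (W ≃[L] W)) : ℕ → Set W × Set (W ≃[L] W)
  | 0 => (X, H₀)
  | n + 1 =>
    ((Substructure.closure L (SH X H₀ n).1 : Set W) ∪
       ⋃ h ∈ (SH X H₀ n).2, (⇑h '' (SH X H₀ n).1 ∪ ⇑h.symm '' (SH X H₀ n).1),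
     (SH X H₀ n).2 ∪ pickAut L W '' taskSet W (SH X H₀ n).1)

variable (X : Set W) (H₀ : Set (W ≃[L] W))

theorem SH_zero : SH L W X H₀ 0 = (X, H₀) := rfl

theorem SH_succ_fst (n : ℕ) : (SH L W X H₀ (n+1)).1 =
    (Substructure.closure L (SH L W X H₀ n).1 : Set W) ∪
      ⋃ h ∈ (SH L W X H₀ n).2, (⇑h '' (SH L W X H₀ n).1 ∪ ⇑h.symm '' (SH L W X H₀ n).1) := rfl

theorem SH_succ_snd (n : ℕ) : (SH L W X H₀ (n+1)).2 =
    (SH L W X H₀ n).2 ∪ pickAut L W '' taskSet W (SH L W X H₀ n).1 := rfl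

theorem closure_subset_succ (n : ℕ) :
    (Substructure.closure L (SH L W X H₀ n).1 : Set W) ⊆ (SH L W X H₀ (n+1)).1 :=
  (SH_succ_fst L W X H₀ n) ▸ subset_union_left

theorem S_subset_succ (n : ℕ) : (SH L W X H₀ n).1 ⊆ (SH L W X H₀ (n+1)).1 :=
  fun _ hx => closure_subset_succ L W X H₀ n (Substructure.subset_closure hx)

theorem S_mono : Monotone (fun n => (SH L W X H₀ n).1) :=
  monotone_nat_of_le_succ (S_subset_succ L W X H₀)

theorem H_subset_succ (n : ℕ) : (SH L W X H₀ n).2 ⊆ (SH L W X H₀ (n+1)).2 :=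
  (SH_succ_snd L W X H₀ n) ▸ subset_union_left

theorem H_mono : Monotone (fun n => (SH L W X H₀ n).2) :=
  monotone_nat_of_le_succ (H_subset_succ L W X H₀)

theorem image_subset_succ {n : ℕ} {h : W ≃[L] W} (hh : h ∈ (SH L W X H₀ n).2) :
    ⇑h '' (SH L W X H₀ n).1 ⊆ (SH L W X H₀ (n+1)).1 := by
  rw [SH_succ_fst]
  exact fun x hx => Or.inr (Set.mem_biUnion hh (Or.inl hx))

theorem symm_image_subset_succ {n : ℕ} {h : W ≃[L] W} (hh : h ∈ (SH L W X H₀ n).2) :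
    ⇑h.symm '' (SH L W X H₀ n).1 ⊆ (SH L W X H₀ (n+1)).1 := by
  rw [SH_succ_fst]
  exact fun x hx => Or.inr (Set.mem_biUnion hh (Or.inr hx))

theorem pickAut_mem_succ {n : ℕ} {p : Task W} (hp : p ∈ taskSet W (SH L W X H₀ n).1) :
    pickAut L W p ∈ (SH L W X H₀ (n+1)).2 := by
  rw [SH_succ_snd]
  exact Or.inr ⟨p, hp, rfl⟩

theorem card_SH [Countable L.Symbols] {κ : Cardinal} (hκ : ℵ₀ ≤ κ) (hX : #X ≤ κ)
    (hH₀ : #H₀ ≤ κ) (n : ℕ) : #(SH L W X H₀ n).1 ≤ κ ∧ #(SH L W X H₀ n).2 ≤ κ := by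
  induction n with
  | zero => exact ⟨hX, hH₀⟩
  | succ n ih =>
    obtain ⟨hS, hH⟩ := ih
    constructor
    · rw [SH_succ_fst]
      refine (Cardinal.mk_union_le _ _).trans ?_
      have h1 : #(Substructure.closure L (SH L W X H₀ n).1 : Set W) ≤ κ :=
        mk_closure_le L W hκ hS
      have h2 : #(⋃ h ∈ (SH L W X H₀ n).2,
          (⇑h '' (SH L W X H₀ n).1 ∪ ⇑h.symm '' (SH L W X H₀ n).1)) ≤ κ := by
        rw [Set.biUnion_eq_iUnion]
        refine (Cardinal.mk_iUnion_le _).trans ?_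
        have hsup : ⨆ h : (SH L W X H₀ n).2,
            #((⇑h.1 '' (SH L W X H₀ n).1 ∪ ⇑h.1.symm '' (SH L W X H₀ n).1) : Set W) ≤ κ := by
          refine ciSup_le' fun h => (Cardinal.mk_union_le _ _).trans ?_
          have i1 := (Cardinal.mk_image_le (f := ⇑h.1) (s := (SH L W X H₀ n).1)).trans hS
          have i2 := (Cardinal.mk_image_le (f := ⇑h.1.symm) (s := (SH L W X H₀ n).1)).trans hS
          exact (add_le_add i1 i2).trans (by rw [Cardinal.add_eq_self hκ])
        calc #(SH L W X H₀ n).2 * _ ≤ κ * κ := mul_le_mul' hH hsup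
          _ = κ := Cardinal.mul_eq_self hκ
      exact (add_le_add h1 h2).trans (le_of_eq (Cardinal.add_eq_self hκ))
    · rw [SH_succ_snd]
      refine (Cardinal.mk_union_le _ _).trans ?_
      have h2 : #(pickAut L W '' taskSet W (SH L W X H₀ n).1) ≤ κ :=
        (Cardinal.mk_image_le).trans (mk_taskSet_le W hκ hS)
      exact (add_le_add hH h2).trans (le_of_eq (Cardinal.add_eq_self hκ))

/-- Restrict an automorphism of `W` to a substructure it fixes setwise. -/
def restrictEquiv (h : W ≃[L] W) (U : L.Substructure W) (hU : ∀ x : W, x ∈ U ↔ h x ∈ U) :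
    U ≃[L] U where
  toFun u := ⟨h u, (hU u).1 u.2⟩
  invFun u := ⟨h.symm u, (hU (h.symm u)).2 (by simpa using u.2)⟩
  left_inv u := Subtype.ext (by simp)
  right_inv u := Subtype.ext (by simp)
  map_fun' f x := Subtype.ext (h.map_fun f _)
  map_rel' r x := h.map_rel r _

@[simp] theorem restrictEquiv_apply (h : W ≃[L] W) (U : L.Substructure W)
    (hU : ∀ x : W, x ∈ U ↔ h x ∈ U) (u : U) :
    (restrictEquiv L W h U hU u : W) = h u := rfl

end Statement10Aux
end Statement10Aux

open Statement10Aux in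
/-- (Closing-off lemma.) Let `W` be an ultrahomogeneous structure in a
countable language, `X ⊆ W` infinite and `H₀` a set of automorphisms of `W` with
`|H₀| ≤ |X|`. Then there are a substructure `U ⊇ X` of `W` with `|U| = |X|` and a set of
automorphisms `H ⊇ H₀` with `|H| ≤ |X|` such that every `h ∈ H` maps `U` onto itself, every
isomorphism between finitely generated substructures of `U` extends to the restriction to `U`
of some `h ∈ H`, and `U` is ultrahomogeneous. -/
theorem statement10 (L : FirstOrder.Language.{0, 0}) [Countable L.Symbols]
    (W : Type) [L.Structure W]
    (hW : L.IsUltrahomogeneous W)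
    (X : Set W) (hX : X.Infinite)
    (H₀ : Set (W ≃[L] W)) (hH₀ : #H₀ ≤ #X) :
    ∃ (U : L.Substructure W) (H : Set (W ≃[L] W)),
      X ⊆ (U : Set W) ∧ #U = #X ∧ H₀ ⊆ H ∧ #H ≤ #X ∧
      (∀ h ∈ H, (⇑h) '' (U : Set W) = (U : Set W)) ∧
      (∀ (A B : L.Substructure U), A.FG → B.FG → ∀ φ : A ≃[L] B,
        ∃ h ∈ H, ∀ a : A, h ((a : U) : W) = ((φ a : B) : W)) ∧
      L.IsUltrahomogeneous U := by
  classical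
  set κ := #X with hκdef
  have hκ : ℵ₀ ≤ κ := by
    haveI := hX.to_subtype
    exact Cardinal.aleph0_le_mk X
  set S : ℕ → Set W := fun n => (SH L W X H₀ n).1 with hSdef
  set Hn : ℕ → Set (W ≃[L] W) := fun n => (SH L W X H₀ n).2 with hHdef
  have hcard := card_SH L W X H₀ hκ le_rfl hH₀
  -- the union
  set Uset : Set W := ⋃ n, S n with hUsetdef
  have hmemU : ∀ {x : W}, x ∈ Uset ↔ ∃ n, x ∈ S n := fun {x} => Set.mem_iUnion
  -- U is a substructure
  set U : L.Substructure W := {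
    carrier := Uset
    fun_mem := by
      intro k f x hx
      choose m hm using fun i => hmemU.1 (hx i)
      set N := Finset.univ.sup m with hN
      have hmN : ∀ i, x i ∈ S N := fun i =>
        S_mono L W X H₀ (Finset.le_sup (Finset.mem_univ i)) (hm i)
      refine hmemU.2 ⟨N + 1, closure_subset_succ L W X H₀ N ?_⟩
      exact Substructure.fun_mem (Substructure.closure L (S N)) f x
        (fun i => Substructure.subset_closure (hmN i)) } with hUdef
  have hUcoe : (U : Set W) = Uset := rfl
  set H : Set (W ≃[L] W) := ⋃ n, Hn n with hHdef2
  have hmemH : ∀ {h : W ≃[L] W}, h ∈ H ↔ ∃ n, h ∈ Hn n := fun {h} => Set.mem_iUnion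
  -- X ⊆ U
  have hXU : X ⊆ (U : Set W) := fun x hx => hmemU.2 ⟨0, hx⟩
  -- cardinality of U
  have hcardU : #U = κ := by
    refine le_antisymm ?_ (Cardinal.mk_le_mk_of_subset hXU)
    refine (Cardinal.mk_iUnion_le S).trans ?_
    rw [Cardinal.mk_nat]
    calc ℵ₀ * ⨆ n, #(S n) ≤ κ * κ :=
        mul_le_mul' hκ (ciSup_le' fun n => (hcard n).1)
      _ = κ := Cardinal.mul_eq_self hκ
  -- H₀ ⊆ H, card H
  have hH₀H : H₀ ⊆ H := fun h hh => hmemH.2 ⟨0, hh⟩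
  have hcardH : #H ≤ κ := by
    refine (Cardinal.mk_iUnion_le Hn).trans ?_
    rw [Cardinal.mk_nat]
    calc ℵ₀ * ⨆ n, #(Hn n) ≤ κ * κ :=
        mul_le_mul' hκ (ciSup_le' fun n => (hcard n).2)
      _ = κ := Cardinal.mul_eq_self hκ
  -- every h ∈ H maps U onto U
  have hHU : ∀ h ∈ H, ⇑h '' (U : Set W) = (U : Set W) := by
    intro h hh
    obtain ⟨n, hn⟩ := hmemH.1 hh
    apply Set.Subset.antisymm
    · rintro _ ⟨x, hx, rfl⟩
      obtain ⟨m, hm⟩ := hmemU.1 hx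
      have hxm : x ∈ S (max n m) := S_mono L W X H₀ (le_max_right n m) hm
      have hhm : h ∈ Hn (max n m) := H_mono L W X H₀ (le_max_left n m) hn
      exact hmemU.2 ⟨max n m + 1, image_subset_succ L W X H₀ hhm ⟨x, hxm, rfl⟩⟩
    · intro y hy
      obtain ⟨m, hm⟩ := hmemU.1 hy
      have hym : y ∈ S (max n m) := S_mono L W X H₀ (le_max_right n m) hm
      have hhm : h ∈ Hn (max n m) := H_mono L W X H₀ (le_max_left n m) hn
      have : h.symm y ∈ S (max n m + 1) :=
        symm_image_subset_succ L W X H₀ hhm ⟨y, hym, rfl⟩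
      exact ⟨h.symm y, hmemU.2 ⟨max n m + 1, this⟩, by simp⟩
  -- key extension property
  have key : ∀ (A B : L.Substructure U), A.FG → B.FG → ∀ φ : A ≃[L] B,
      ∃ h ∈ H, ∀ a : A, h ((a : U) : W) = ((φ a : B) : W) := by
    intro A B hA _ φ
    obtain ⟨s, hs⟩ := hA
    set k := s.card with hk
    set e : Fin k → ↑(s : Finset U) := fun i => s.equivFin.symm i with he
    have mem_A : ∀ u : ↑(s : Finset U), (u : U) ∈ A := by
      intro u
      rw [← hs]
      exact Substructure.subset_closure (by exact_mod_cast u.2)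
    set a : Fin k → A := fun i => ⟨(e i : U), mem_A (e i)⟩ with ha
    set x : Fin k → W := fun i => ((e i : U) : W) with hx
    set y : Fin k → W := fun i => ((φ (a i) : U) : W) with hy
    -- the automorphism from ultrahomogeneity of W
    set A' : L.Substructure W := A.map U.subtype.toHom with hA'
    have hA'fg : A'.FG := Substructure.FG.map _ ⟨s, hs⟩
    set eA : A ≃[L] A' := U.subtype.substructureEquivMap A with heA
    set ψ : A' ↪[L] W :=
      (U.subtype.comp B.subtype).comp (φ.toEmbedding.comp eA.symm.toEmbedding) with hψ
    obtain ⟨g, hg⟩ := hW A' hA'fg ψ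
    have hgA : ∀ c : A, g ((c : U) : W) = ((φ c : U) : W) := by
      intro c
      have h1 : ((eA c : A') : W) = ((c : U) : W) :=
        U.subtype.substructureEquivMap_apply A c
      have h2 := congrFun (congrArg DFunLike.coe hg) (eA c)
      simp only [hψ, Embedding.comp_apply, Language.Equiv.coe_toEmbedding,
        Substructure.coe_subtype] at h2
      rw [h1, Language.Equiv.symm_apply_apply] at h2
      exact h2.symm
    -- the task
    have hex : ∃ g' : W ≃[L] W, ∀ i, g' (x i) = y i := ⟨g, fun i => hgA (a i)⟩
    set h := pickAut L W ⟨k, x, y⟩ with hhdef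
    have hsol : ∀ i, h (x i) = y i :=
      pickAut_spec L W (p := ⟨k, x, y⟩) hex
    -- membership of the task
    have hmem : ∀ i : Fin k, ∃ n, x i ∈ S n ∧ y i ∈ S n := by
      intro i
      obtain ⟨n1, hn1⟩ := hmemU.1 (e i : U).2
      obtain ⟨n2, hn2⟩ := hmemU.1 ((φ (a i) : U)).2
      exact ⟨max n1 n2, S_mono L W X H₀ (le_max_left _ _) hn1,
        S_mono L W X H₀ (le_max_right _ _) hn2⟩
    choose m hm using hmem
    set N := Finset.univ.sup m with hN
    have hpmem : (⟨k, x, y⟩ : Statement10Aux.Task W) ∈ taskSet W (S N) := by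
      constructor
      · exact fun i => S_mono L W X H₀ (Finset.le_sup (Finset.mem_univ i)) (hm i).1
      · exact fun i => S_mono L W X H₀ (Finset.le_sup (Finset.mem_univ i)) (hm i).2
    have hhH : h ∈ H := hmemH.2 ⟨N + 1, pickAut_mem_succ L W X H₀ hpmem⟩
    refine ⟨h, hhH, ?_⟩
    -- h agrees with g on all of A
    have hrange : Set.range x = (fun u : U => (u : W)) '' (s : Set U) := by
      ext w
      constructor
      · rintro ⟨i, rfl⟩
        exact ⟨e i, by exact_mod_cast (e i).2, rfl⟩
      · rintro ⟨u, hu, rfl⟩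
        exact ⟨s.equivFin ⟨u, hu⟩, by simp [hx, he]⟩
    have heqOn : Set.EqOn ⇑h.toHom ⇑g.toHom (Set.range x) := by
      rintro _ ⟨i, rfl⟩
      simp only [Equiv.coe_toHom]
      rw [hsol i]
      exact (hgA (a i)).symm
    have hclos := Hom.eqOn_closure heqOn
    intro c
    have hcA' : ((c : U) : W) ∈ Substructure.closure L (Set.range x) := by
      rw [hrange]
      have : (fun u : U => (u : W)) '' (s : Set U) = ⇑U.subtype.toHom '' (s : Set U) := rfl
      rw [this, ← Substructure.map_closure, hs]
      exact ⟨c, c.2, rfl⟩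
    have := hclos hcA'
    simp only [Equiv.coe_toHom] at this
    rw [this]
    exact hgA c
  refine ⟨U, H, hXU, hcardU, hH₀H, hcardH, hHU, key, ?_⟩
  -- ultrahomogeneity of U
  intro T hT f
  have hTfg : T.FG := hT
  have hrangefg : f.toHom.range.FG := by
    have := (T.fg_iff_structure_fg.1 hT).range f.toHom
    exact this
  obtain ⟨h, hhH, hext⟩ := key T f.toHom.range hT hrangefg f.equivRange
  have himg := hHU h hhH
  have hUfix : ∀ w : W, w ∈ U ↔ h w ∈ U := by
    intro w
    constructor
    · intro hw
      have : h w ∈ ⇑h '' (U : Set W) := ⟨w, hw, rfl⟩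
      rwa [himg] at this
    · intro hw
      have : h w ∈ (U : Set W) := hw
      rw [← himg] at this
      obtain ⟨w', hw', hww'⟩ := this
      rwa [← h.injective hww']
  refine ⟨restrictEquiv L W h U hUfix, ?_⟩
  ext c
  have h1 : h ((c : U) : W) = ((f c : U) : W) := by
    rw [hext c, f.equivRange_apply]
  exact h1.symm
end

section
/- Let L be a countable first-order language, let F be a Fraïssé class of L-structures, and suppose there exists an ultrahomogeneous L-structure W of uncountable cardinality λ whose age equals F. Then for every uncountable cardinal κ ≤ λ there exists an ultrahomogeneous L-structure of cardinality κ whose age equals F. -/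
open FirstOrder Language Cardinal CategoryTheory Set
open FirstOrder.Language.Substructure

namespace Statement11

variable {L : FirstOrder.Language.{0,0}} {W : Type} [L.Structure W]

open scoped Classical in
/-- global choice of an automorphism sending tuple `a` to tuple `b`, if one exists. -/
noncomputable def pick (L : FirstOrder.Language.{0,0}) (W : Type) [L.Structure W]
    (k : ℕ) (a b : Fin k → W) : W ≃[L] W :=
  if h : ∃ g : W ≃[L] W, ∀ i, g (a i) = b i then h.choose else Language.Equiv.refl L W

theorem pick_spec {k : ℕ} {a b : Fin k → W} (h : ∃ g : W ≃[L] W, ∀ i, g (a i) = b i) :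
    ∀ i, pick L W k a b (a i) = b i := by
  classical
  rw [pick]
  rw [dif_pos h]
  exact h.choose_spec

noncomputable def chain (S0 : L.Substructure W) : ℕ → L.Substructure W
  | 0 => S0
  | n+1 => closure L ((chain S0 n : Set W) ∪
      ⋃ p : (Σ k : ℕ, (Fin k → (chain S0 n)) × (Fin k → (chain S0 n))),
        ((pick L W p.1 (fun i => (p.2.1 i : W)) fun i => (p.2.2 i : W)) '' (chain S0 n) ∪
         (pick L W p.1 (fun i => (p.2.1 i : W)) fun i => (p.2.2 i : W)).symm '' (chain S0 n)))

theorem chain_le_succ (S0 : L.Substructure W) (n : ℕ) : chain S0 n ≤ chain S0 (n+1) := by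
  intro x hx
  exact subset_closure (Set.mem_union_left _ hx)

theorem chain_mono (S0 : L.Substructure W) : Monotone (chain S0) :=
  monotone_nat_of_le_succ (chain_le_succ S0)

theorem key_subset (S0 : L.Substructure W) (n : ℕ) {k : ℕ} (a b : Fin k → W)
    (ha : ∀ i, a i ∈ chain S0 n) (hb : ∀ i, b i ∈ chain S0 n) :
    (pick L W k a b) '' (chain S0 n) ⊆ (chain S0 (n+1) : Set W) ∧
    (pick L W k a b).symm '' (chain S0 n) ⊆ (chain S0 (n+1) : Set W) := by
  have h1 : ((pick L W k a b) '' (chain S0 n) ∪ (pick L W k a b).symm '' (chain S0 n))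
      ⊆ (chain S0 (n+1) : Set W) := by
    refine Set.Subset.trans ?_ (Set.Subset.trans (Set.subset_union_right)
      (subset_closure (L := L)))
    exact Set.subset_iUnion_of_subset ⟨k, fun i => ⟨a i, ha i⟩, fun i => ⟨b i, hb i⟩⟩
      (by exact subset_rfl)
  exact ⟨(Set.subset_union_left).trans h1, (Set.subset_union_right).trans h1⟩


theorem card_chain_le [Countable (Σ l, L.Functions l)] (S0 : L.Substructure W) {κ : Cardinal}
    (hκ : ℵ₀ ≤ κ) (h0 : #S0 ≤ κ) : ∀ n, #(chain S0 n) ≤ κ := by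
  intro n
  induction n with
  | zero => exact h0
  | succ n ih =>
    have hC : #(chain S0 n : Set W) ≤ κ := ih
    set C := (chain S0 n : Set W) with hCdef
    -- cardinality of the index type
    have hι : #(Σ k : ℕ, (Fin k → (chain S0 n)) × (Fin k → (chain S0 n))) ≤ κ := by
      rw [Cardinal.mk_sigma]
      refine le_trans (Cardinal.sum_le_sum _ (fun _ => κ) ?_) ?_
      · intro k
        have harrow : #(Fin k → (chain S0 n)) ≤ κ := by
          rw [Cardinal.mk_arrow]
          simp only [Cardinal.lift_id, Cardinal.mk_fin]
          calc (#(chain S0 n)) ^ (k : Cardinal) ≤ κ ^ (k : Cardinal) :=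
                Cardinal.power_le_power_right ih
          _ ≤ κ := Cardinal.power_nat_le hκ
        calc #((Fin k → (chain S0 n)) × (Fin k → (chain S0 n)))
            = #(Fin k → (chain S0 n)) * #(Fin k → (chain S0 n)) := by
              rw [Cardinal.mk_prod]; simp [Cardinal.lift_id]
          _ ≤ κ * κ := mul_le_mul' harrow harrow
          _ = κ := Cardinal.mul_eq_self hκ
      · rw [Cardinal.sum_const']
        calc #ℕ * κ = ℵ₀ * κ := by rw [Cardinal.mk_nat]
          _ ≤ κ * κ := mul_le_mul' hκ le_rfl
          _ = κ := Cardinal.mul_eq_self hκ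
    have hbig : #((chain S0 n : Set W) ∪
        ⋃ p : (Σ k : ℕ, (Fin k → (chain S0 n)) × (Fin k → (chain S0 n))),
        ((pick L W p.1 (fun i => (p.2.1 i : W)) fun i => (p.2.2 i : W)) '' (chain S0 n) ∪
         (pick L W p.1 (fun i => (p.2.1 i : W)) fun i => (p.2.2 i : W)).symm '' (chain S0 n)) :
        Set W) ≤ κ := by
      refine le_trans (Cardinal.mk_union_le _ _) ?_
      have hU : #(⋃ p : (Σ k : ℕ, (Fin k → (chain S0 n)) × (Fin k → (chain S0 n))),
          ((pick L W p.1 (fun i => (p.2.1 i : W)) fun i => (p.2.2 i : W)) '' (chain S0 n) ∪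
           (pick L W p.1 (fun i => (p.2.1 i : W)) fun i => (p.2.2 i : W)).symm '' (chain S0 n)) :
          Set W) ≤ κ := by
        refine le_trans (Cardinal.mk_iUnion_le _) ?_
        refine le_trans (mul_le_mul' hι (ciSup_le' fun p => ?_)) (by
          rw [Cardinal.mul_eq_self hκ])
        refine le_trans (Cardinal.mk_union_le _ _) ?_
        have h1 := Cardinal.mk_image_le (f := ⇑(pick L W p.1 (fun i => (p.2.1 i : W))
          fun i => (p.2.2 i : W))) (s := (chain S0 n : Set W))
        have h2 := Cardinal.mk_image_le (f := ⇑(pick L W p.1 (fun i => (p.2.1 i : W))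
          fun i => (p.2.2 i : W)).symm) (s := (chain S0 n : Set W))
        calc _ ≤ κ + κ := add_le_add (h1.trans hC) (h2.trans hC)
          _ = κ := Cardinal.add_eq_self hκ
      calc #C + _ ≤ κ + κ := add_le_add hC hU
        _ = κ := Cardinal.add_eq_self hκ
    have := Substructure.lift_card_closure_le (L := L) (M := W)
      (s := ((chain S0 n : Set W) ∪
        ⋃ p : (Σ k : ℕ, (Fin k → (chain S0 n)) × (Fin k → (chain S0 n))),
        ((pick L W p.1 (fun i => (p.2.1 i : W)) fun i => (p.2.2 i : W)) '' (chain S0 n) ∪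
         (pick L W p.1 (fun i => (p.2.1 i : W)) fun i => (p.2.2 i : W)).symm '' (chain S0 n))))
    simp only [Cardinal.lift_id] at this
    refine le_trans this (max_le hκ ?_)
    have hfun : #(Σ i, L.Functions i) ≤ ℵ₀ := Cardinal.mk_le_aleph0
    calc _ ≤ κ + ℵ₀ := add_le_add hbig hfun
      _ ≤ κ + κ := add_le_add le_rfl hκ
      _ = κ := Cardinal.add_eq_self hκ


/-- Restrict an automorphism of `W` preserving `N` (in both directions) to `N`. -/
noncomputable def restrictEquiv (g : W ≃[L] W) (N : L.Substructure W)
    (h1 : ∀ x ∈ N, g x ∈ N) (h2 : ∀ x ∈ N, g.symm x ∈ N) : ↥N ≃[L] ↥N where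
  toFun x := ⟨g x, h1 x x.2⟩
  invFun x := ⟨g.symm x, h2 x x.2⟩
  left_inv x := Subtype.ext (g.symm_apply_apply x)
  right_inv x := Subtype.ext (g.apply_symm_apply x)
  map_fun' f x := Subtype.ext (by
    simp only [Substructure.inducedStructure]
    exact g.map_fun f _)
  map_rel' r x := by
    exact g.map_rel r _

@[simp] theorem restrictEquiv_apply (g : W ≃[L] W) (N : L.Substructure W)
    (h1 : ∀ x ∈ N, g x ∈ N) (h2 : ∀ x ∈ N, g.symm x ∈ N) (x : N) :
    (restrictEquiv g N h1 h2 x : W) = g x := rfl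


theorem ultrahomog_iSup (hW : L.IsUltrahomogeneous W) (S0 : L.Substructure W) :
    L.IsUltrahomogeneous ↥(⨆ n, chain S0 n) := by
  set N : L.Substructure W := ⨆ n, chain S0 n with hNdef
  have memN : ∀ x : W, x ∈ N ↔ ∃ n, x ∈ chain S0 n := fun x =>
    Substructure.mem_iSup_of_directed ((chain_mono S0).directed_le)
  intro S hS f
  set j := N.subtype with hjdef
  set A : L.Substructure W := S.map j.toHom with hAdef
  have hA : A.FG := hS.map _
  set θ := j.substructureEquivMap S with hθdef
  set e : A ↪[L] W := (j.comp f).comp θ.symm.toEmbedding with hedef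
  obtain ⟨g₀, hg₀⟩ := hW A hA e
  obtain ⟨k, a, hagen⟩ := Substructure.fg_iff_exists_fin_generating_family.1 hA
  have haA : ∀ i, a i ∈ A := fun i => hagen ▸ Substructure.subset_closure (Set.mem_range_self i)
  have hAN : A ≤ N := by
    intro x hx
    rw [hAdef, Substructure.mem_map] at hx
    obtain ⟨y, _, rfl⟩ := hx
    exact (y : ↥N).2
  set b : Fin k → W := fun i => g₀ (a i) with hbdef
  have hbe : ∀ i, b i = e ⟨a i, haA i⟩ := by
    intro i
    rw [hg₀]
    rfl
  have heN : ∀ z : A, e z ∈ N := by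
    intro z
    rw [hedef]
    exact ((f (θ.symm z)) : ↥N).2
  have hbN : ∀ i, b i ∈ N := fun i => (hbe i) ▸ heN _
  have hex : ∀ i, ∃ m, a i ∈ chain S0 m ∧ b i ∈ chain S0 m := by
    intro i
    obtain ⟨n1, h1⟩ := (memN _).1 (hAN (haA i))
    obtain ⟨n2, h2⟩ := (memN _).1 (hbN i)
    exact ⟨max n1 n2, chain_mono S0 (le_max_left _ _) h1,
      chain_mono S0 (le_max_right _ _) h2⟩
  choose ν hν using hex
  set n := Finset.univ.sup ν with hn
  have han : ∀ i, a i ∈ chain S0 n :=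
    fun i => chain_mono S0 (Finset.le_sup (Finset.mem_univ i)) (hν i).1
  have hbn : ∀ i, b i ∈ chain S0 n :=
    fun i => chain_mono S0 (Finset.le_sup (Finset.mem_univ i)) (hν i).2
  set g := pick L W k a b with hgdef
  have hg : ∀ i, g (a i) = b i := pick_spec ⟨g₀, fun i => rfl⟩
  -- g agrees with g₀ on A
  have heqA : ∀ x ∈ A, g x = g₀ x := by
    have h1 : Set.EqOn ⇑(g.toEmbedding.toHom) ⇑(g₀.toEmbedding.toHom) (Set.range a) := by
      rintro x ⟨i, rfl⟩
      exact hg i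
    have h2 := Language.Hom.eqOn_closure h1
    rw [hagen] at h2
    exact fun x hx => h2 hx
  -- g preserves N
  have hgN : ∀ x ∈ N, g x ∈ N := by
    intro x hx
    obtain ⟨m, hm⟩ := (memN x).1 hx
    have hm' : x ∈ chain S0 (max m n) := chain_mono S0 (le_max_left _ _) hm
    have hk := (key_subset S0 (max m n) a b
      (fun i => chain_mono S0 (le_max_right _ _) (han i))
      (fun i => chain_mono S0 (le_max_right _ _) (hbn i))).1
    exact (memN _).2 ⟨max m n + 1, hk (Set.mem_image_of_mem _ hm')⟩
  have hgN' : ∀ x ∈ N, g.symm x ∈ N := by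
    intro x hx
    obtain ⟨m, hm⟩ := (memN x).1 hx
    have hm' : x ∈ chain S0 (max m n) := chain_mono S0 (le_max_left _ _) hm
    have hk := (key_subset S0 (max m n) a b
      (fun i => chain_mono S0 (le_max_right _ _) (han i))
      (fun i => chain_mono S0 (le_max_right _ _) (hbn i))).2
    exact (memN _).2 ⟨max m n + 1, hk (Set.mem_image_of_mem _ hm')⟩
  refine ⟨restrictEquiv g N hgN hgN', ?_⟩
  ext x
  have hmemA : ((x : ↥N) : W) ∈ A := by
    rw [hAdef, Substructure.mem_map]
    exact ⟨x, x.2, rfl⟩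
  have hθx : θ x = ⟨((x : ↥N) : W), hmemA⟩ := by
    apply Subtype.ext
    exact j.substructureEquivMap_apply S x
  have key : (f x : W) = g ((x : ↥N) : W) := by
    rw [heqA _ hmemA]
    have h3 : e ⟨((x : ↥N) : W), hmemA⟩ = g₀ ((x : ↥N) : W) :=
      congr_fun (congr_arg DFunLike.coe hg₀) ⟨((x : ↥N) : W), hmemA⟩
    rw [← h3, hedef]
    have h4 : θ.symm ⟨((x : ↥N) : W), hmemA⟩ = x := by rw [← hθx, θ.symm_apply_apply]
    show _ = (j.comp f) (θ.symm ⟨((x : ↥N) : W), hmemA⟩)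
    rw [h4]
    rfl
  exact key

end Statement11

open Statement11 FirstOrder.Language.Substructure Set

set_option linter.unusedVariables false in
/-- If `K` is a Fraïssé class in a countable language and there is an
ultrahomogeneous structure `W` of uncountable cardinality `λ = #W` with age `K`, then for every
uncountable cardinal `κ ≤ #W` there is an ultrahomogeneous structure of cardinality `κ` with
age `K`. -/
theorem statement11 (L : FirstOrder.Language.{0, 0}) [Countable L.Symbols]
    (K : Set (Bundled.{0} L.Structure)) [IsFraisse K]
    (W : Type) [L.Structure W]
    (hW : L.IsUltrahomogeneous W) (hage : L.age W = K)
    (hunc : aleph0 < #W)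
    (κ : Cardinal.{0}) (hκ : aleph0 < κ) (hκW : κ ≤ #W) :
    ∃ N : Bundled.{0} L.Structure, #N = κ ∧
      L.IsUltrahomogeneous N ∧ L.age N = K := by
  classical
  have hκ0 : ℵ₀ ≤ κ := hκ.le
  obtain ⟨B, hB⟩ := Cardinal.le_mk_iff_exists_set.1 hκW
  set Q := Quotient.mk' '' K with hQdef
  have hQc : Q.Countable := IsFraisse.is_essentially_countable
  haveI : Countable ↥Q := hQc.to_subtype
  set R : Q → Bundled L.Structure := fun q => Quotient.out q.val with hRdef
  have hout : ∀ q : Q, R q ∈ K := by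
    rintro ⟨q, M, hM, rfl⟩
    have h1 : (Quotient.mk' M).out ≈ M := Quotient.mk_out M
    exact (IsFraisse.is_equiv_invariant (K := K) h1).2 hM
  have hemb : ∀ q : Q, Nonempty (R q ↪[L] W) := by
    intro q
    have h2 : R q ∈ L.age W := by rw [hage]; exact hout q
    exact h2.2
  set ε : ∀ q : Q, R q ↪[L] W :=
    fun q => Classical.choice (hemb q) with hεdef
  have houtc : ∀ q : Q, Countable (R q) := by
    intro q
    have := IsFraisse.FG _ (hout q)
    exact Structure.cg_iff_countable.1 this.cg
  set A₀ : Set W := ⋃ q : Q, Set.range (ε q) with hA₀def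
  have hA₀c : A₀.Countable := by
    refine Set.countable_iUnion fun q => ?_
    haveI := houtc q
    exact Set.countable_range _
  set S0 : L.Substructure W := closure L (A₀ ∪ B) with hS0def
  have hS0le : #S0 ≤ κ := by
    have h1 := Substructure.lift_card_closure_le (L := L) (M := W) (s := A₀ ∪ B)
    simp only [Cardinal.lift_id] at h1
    refine h1.trans (max_le hκ0 ?_)
    have h2 : #(A₀ ∪ B : Set W) ≤ κ := by
      refine (Cardinal.mk_union_le _ _).trans ?_
      have h3 : #A₀ ≤ ℵ₀ := by
        haveI := hA₀c.to_subtype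
        exact Cardinal.mk_le_aleph0
      calc #A₀ + #B ≤ ℵ₀ + κ := add_le_add h3 hB.le
        _ ≤ κ + κ := add_le_add hκ0 le_rfl
        _ = κ := Cardinal.add_eq_self hκ0
    have h4 : #(Σ i, L.Functions i) ≤ ℵ₀ := Cardinal.mk_le_aleph0
    calc #(A₀ ∪ B : Set W) + #(Σ i, L.Functions i) ≤ κ + ℵ₀ := add_le_add h2 h4
      _ ≤ κ + κ := add_le_add le_rfl hκ0
      _ = κ := Cardinal.add_eq_self hκ0
  set Nsub : L.Substructure W := ⨆ n, chain S0 n with hNdef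
  have memN : ∀ x : W, x ∈ Nsub ↔ ∃ n, x ∈ chain S0 n := fun x =>
    Substructure.mem_iSup_of_directed ((chain_mono S0).directed_le)
  have hchain_le : ∀ n, chain S0 n ≤ Nsub := fun n => le_iSup _ n
  have hNset : (Nsub : Set W) = ⋃ n, (chain S0 n : Set W) := by
    ext x
    simp only [SetLike.mem_coe, memN, Set.mem_iUnion]
  -- cardinality
  have hcard : #Nsub = κ := by
    apply le_antisymm
    · have h1 : #Nsub = #(⋃ n, (chain S0 n : Set W)) := by rw [← hNset]; rfl
      rw [h1]
      refine (Cardinal.mk_iUnion_le _).trans ?_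
      have h2 : ⨆ n, #(chain S0 n : Set W) ≤ κ :=
        ciSup_le' fun n => card_chain_le S0 hκ0 hS0le n
      calc #ℕ * ⨆ n, #(chain S0 n : Set W) ≤ ℵ₀ * κ := by
            rw [Cardinal.mk_nat]; exact mul_le_mul' le_rfl h2
        _ ≤ κ * κ := mul_le_mul' hκ0 le_rfl
        _ = κ := Cardinal.mul_eq_self hκ0
    · have hBsub : B ⊆ (Nsub : Set W) := by
        refine Set.Subset.trans ?_ (hchain_le 0)
        refine Set.Subset.trans (Set.subset_union_right) (subset_closure (L := L))
      calc κ = #B := hB.symm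
        _ ≤ #(Nsub : Set W) := Cardinal.mk_le_mk_of_subset hBsub
  -- age
  have hageN : L.age ↥Nsub = K := by
    ext M
    constructor
    · rintro ⟨hfg, ⟨emb⟩⟩
      rw [← hage]
      exact ⟨hfg, ⟨Nsub.subtype.comp emb⟩⟩
    · intro hM
      refine ⟨IsFraisse.FG M hM, ?_⟩
      set q : Q := ⟨Quotient.mk' M, M, hM, rfl⟩ with hqdef
      have h1 : (Quotient.mk' M).out ≈ M := Quotient.mk_out M
      obtain ⟨ψ⟩ := (h1 : R q ≈ M)
      refine ⟨Language.Embedding.codRestrict Nsub ((ε q).comp ψ.symm.toEmbedding) fun m => ?_⟩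
      have h2 : ((ε q).comp ψ.symm.toEmbedding) m ∈ A₀ := by
        rw [hA₀def]
        exact Set.mem_iUnion.2 ⟨q, Set.mem_range_self _⟩
      have h3 : A₀ ⊆ (Nsub : Set W) := by
        refine Set.Subset.trans ?_ (hchain_le 0)
        refine Set.Subset.trans (Set.subset_union_left) (subset_closure (L := L))
      exact h3 h2
  exact ⟨⟨↥Nsub, inferInstance⟩, hcard, ultrahomog_iSup hW S0, hageN⟩
end

section
/- Let L be a finite relational first-order language and let F be a Fraïssé class of L-structures. Then the class of countable L-structures with age contained in F has the amalgamation property: for all countable L-structures X, Y, Z whose ages are contained in F and all embeddings f : Z → X, g : Z → Y, there exist a countable L-structure W with age contained in F and embeddings f' : X → W, g' : Y → W such that f' ∘ f = g' ∘ g. -/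
open FirstOrder Language Cardinal CategoryTheory

namespace Statement12

open FirstOrder FirstOrder.Language FirstOrder.Language.BoundedFormula
open scoped Classical

variable {L : FirstOrder.Language.{0,0}}

section Relational
variable [L.IsRelational]

/-- In a relational language, any set is a substructure. -/
def setSub {M : Type*} [L.Structure M] (s : Set M) : L.Substructure M where
  carrier := s
  fun_mem := fun {n} f => isEmptyElim f

@[simp] lemma mem_setSub {M : Type*} [L.Structure M] {s : Set M} {x : M} :
    x ∈ setSub (L := L) s ↔ x ∈ s := Iff.rfl

end Relational

/-- An injective, relation-reflecting map between relational structures is an embedding. -/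
def mkEmb (L : FirstOrder.Language.{0,0}) [L.IsRelational] {M N : Type*} [L.Structure M] [L.Structure N] (x : M → N)
    (hinj : Function.Injective x)
    (hrel : ∀ (n : ℕ) (R : L.Relations n) (v : Fin n → M),
      Structure.RelMap R (x ∘ v) ↔ Structure.RelMap R v) :
    M ↪[L] N :=
  ⟨⟨x, hinj⟩, fun {n} f => isEmptyElim f, fun {n} R v => hrel n R v⟩

@[simp] lemma mkEmb_apply [L.IsRelational] {M N : Type*} [L.Structure M] [L.Structure N]
    (x : M → N) (hinj) (hrel) (m : M) : mkEmb L x hinj hrel m = x m := rfl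

section Diag

variable [L.IsRelational] [Finite L.Symbols]

instance : Finite (Σ m, L.Relations m) :=
  Finite.of_injective (fun p => (Sum.inr p : L.Symbols)) Sum.inr_injective

variable (L) in
/-- The quantifier-free diagram of a structure on `Fin n`. -/
noncomputable def diagBF (n : ℕ) (s : L.Structure (Fin n)) : L.BoundedFormula Empty n :=
  letI : Fintype (Σ p : (Σ m, L.Relations m), (Fin p.1 → Fin n)) := Fintype.ofFinite _
  (BoundedFormula.iInf fun p : Fin n × Fin n =>
    if p.1 = p.2 then ⊤
    else ∼((Term.var (Sum.inr p.1)).bdEqual (Term.var (Sum.inr p.2)))) ⊓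
  (BoundedFormula.iInf fun q : (Σ p : (Σ m, L.Relations m), (Fin p.1 → Fin n)) =>
    if @Structure.RelMap L (Fin n) s q.1.1 q.1.2 q.2
    then q.1.2.boundedFormula fun i => Term.var (Sum.inr (q.2 i))
    else ∼(q.1.2.boundedFormula fun i => Term.var (Sum.inr (q.2 i))))

lemma realize_diagBF {M : Type*} [L.Structure M] {n : ℕ}
    (s : L.Structure (Fin n)) (v : Empty → M) (x : Fin n → M) :
    (diagBF L n s).Realize v x ↔
      (Function.Injective x ∧ ∀ (m : ℕ) (R : L.Relations m) (w : Fin m → Fin n),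
        Structure.RelMap R (x ∘ w) ↔ @Structure.RelMap L (Fin n) s m R w) := by
  classical
  letI : Fintype (Σ p : (Σ m, L.Relations m), (Fin p.1 → Fin n)) := Fintype.ofFinite _
  rw [diagBF]
  rw [BoundedFormula.realize_inf, BoundedFormula.realize_iInf, BoundedFormula.realize_iInf]
  constructor
  · rintro ⟨h1, h2⟩
    constructor
    · intro i j hij
      by_contra hne
      have := h1 (i, j)
      rw [if_neg hne] at this
      rw [BoundedFormula.realize_not, BoundedFormula.realize_bdEqual] at this
      exact this hij
    · intro m R w
      have := h2 ⟨⟨m, R⟩, w⟩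
      by_cases hR : @Structure.RelMap L (Fin n) s m R w
      · rw [if_pos hR] at this
        rw [BoundedFormula.realize_rel] at this
        simp only [Term.realize_var, Sum.elim_inr] at this
        exact iff_of_true this hR
      · rw [if_neg hR] at this
        rw [BoundedFormula.realize_not, BoundedFormula.realize_rel] at this
        simp only [Term.realize_var, Sum.elim_inr] at this
        exact iff_of_false this hR
  · rintro ⟨hinj, hrel⟩
    constructor
    · intro p
      by_cases hp : p.1 = p.2
      · rw [if_pos hp]; exact BoundedFormula.realize_top.2 trivial
      · rw [if_neg hp]
        rw [BoundedFormula.realize_not, BoundedFormula.realize_bdEqual]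
        exact fun h => hp (hinj h)
    · intro q
      by_cases hR : @Structure.RelMap L (Fin n) s q.1.1 q.1.2 q.2
      · rw [if_pos hR, BoundedFormula.realize_rel]
        simp only [Term.realize_var, Sum.elim_inr]
        exact (hrel _ _ _).2 hR
      · rw [if_neg hR, BoundedFormula.realize_not, BoundedFormula.realize_rel]
        simp only [Term.realize_var, Sum.elim_inr]
        exact fun h => hR ((hrel _ _ _).1 h)

variable (L) in
/-- Sentence forbidding a copy of a finite structure not in `K`. -/
noncomputable def forbid (K : Set (Bundled.{0} L.Structure)) (p : Σ n : ℕ, L.Structure (Fin n)) :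
    L.Sentence :=
  if (Bundled.mk (Fin p.1) p.2) ∈ K then ⊤ else ∼(diagBF L p.1 p.2).exs

lemma forbid_realize_of_age {K : Set (Bundled.{0} L.Structure)} {M : Type} [L.Structure M]
    (hage : L.age M ⊆ K) (p : Σ n : ℕ, L.Structure (Fin n)) : M ⊨ forbid L K p := by
  classical
  rw [forbid]
  split_ifs with h
  · exact BoundedFormula.realize_top.2 trivial
  · simp only [Sentence.Realize, Formula.realize_not, BoundedFormula.realize_exs]
    rintro ⟨x, hx⟩
    rw [realize_diagBF] at hx
    letI := p.2
    have e : (Fin p.1) ↪[L] M := mkEmb L x hx.1 (fun m R w => hx.2 m R w)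
    exact h (hage ⟨(Structure.fg_iff_finite).2 inferInstance, ⟨e⟩⟩)

lemma mem_of_forbid {K : Set (Bundled.{0} L.Structure)} {M : Type} [L.Structure M]
    (p : Σ n : ℕ, L.Structure (Fin n)) (hM : M ⊨ forbid L K p)
    (he : letI := p.2; Nonempty ((Fin p.1) ↪[L] M)) : (Bundled.mk (Fin p.1) p.2) ∈ K := by
  classical
  rw [forbid] at hM
  by_contra h
  rw [if_neg h] at hM
  simp only [Sentence.Realize, Formula.realize_not, BoundedFormula.realize_exs] at hM
  letI := p.2
  obtain ⟨e⟩ := he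
  exact hM ⟨e, (realize_diagBF p.2 _ e).2 ⟨e.injective, fun m R w => e.map_rel' R w⟩⟩

lemma age_subset_of {K : Set (Bundled.{0} L.Structure)} [IsFraisse K] {M : Type} [L.Structure M]
    (h : ∀ (n : ℕ) (s : L.Structure (Fin n)),
      (letI := s; Nonempty ((Fin n) ↪[L] M)) → (Bundled.mk (Fin n) s) ∈ K) :
    L.age M ⊆ K := by
  rintro ⟨A, sA⟩ ⟨hfg, ⟨e⟩⟩
  haveI : Finite A := hfg.finite
  obtain ⟨n, ⟨eqv⟩⟩ := Finite.exists_equiv_fin A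
  letI s : L.Structure (Fin n) :=
    ⟨fun {m} F => isEmptyElim F, fun {m} R w => Structure.RelMap R (eqv.symm ∘ w)⟩
  have hemb : (letI := s; Nonempty ((Fin n) ↪[L] M)) :=
    ⟨e.comp (mkEmb L (M := Fin n) (N := A) eqv.symm (eqv.symm.injective)
      (fun m R w => Iff.rfl))⟩
  have hmem := h n s hemb
  have hequiv : Nonempty ((Bundled.mk (Fin n) s) ≃[L] (Bundled.mk A sA)) :=
    ⟨⟨eqv.symm, fun {m} F => isEmptyElim F, fun {m} R w => Iff.rfl⟩⟩
  exact (IsFraisse.is_equiv_invariant (K := K) (M := Bundled.mk (Fin n) s) (N := Bundled.mk A sA)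
    hequiv).1 hmem

end Diag
section Sent

variable [L.IsRelational] {C : Type}

/-- The value of a constant. -/
noncomputable def conMap (Q : Type*) [(L[[C]]).Structure Q] (a : C) : Q :=
  (L.con a).term.realize (default : Empty → Q)

/-- Sentence identifying two constants. -/
noncomputable def eqSent (a b : C) : (L[[C]]).Sentence :=
  Term.equal ((L.con a).term) ((L.con b).term)

lemma realize_eqSent {Q : Type*} [(L[[C]]).Structure Q] (a b : C) :
    Q ⊨ eqSent (L := L) a b ↔ conMap (L := L) Q a = conMap (L := L) Q b := by
  simp only [eqSent, Sentence.Realize, Formula.realize_equal, conMap]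

variable {M : Type} [L.Structure M]

/-- Sentence giving the (in)equality diagram entry of a pair. -/
noncomputable def pairSent (u : M → C) (p : M × M) : (L[[C]]).Sentence :=
  if p.1 = p.2 then ⊤
  else ∼(Term.equal ((L.con (u p.1)).term) ((L.con (u p.2)).term))

lemma realize_pairSent {Q : Type*} [(L[[C]]).Structure Q] (u : M → C) (p : M × M) :
    Q ⊨ pairSent (L := L) u p ↔
      (p.1 ≠ p.2 → conMap (L := L) Q (u p.1) ≠ conMap (L := L) Q (u p.2)) := by
  rw [pairSent]
  split_ifs with h
  · simp only [Sentence.Realize]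
    exact iff_of_true (BoundedFormula.realize_top.2 trivial) (fun h' => absurd h h')
  · simp only [Sentence.Realize, Formula.realize_not, Formula.realize_equal, conMap]
    exact ⟨fun h' _ => h', fun h' => h' h⟩

/-- Sentence giving the relational diagram entry of a tuple. -/
noncomputable def relSent (u : M → C) (q : Σ p : (Σ m, L.Relations m), (Fin p.1 → M)) :
    (L[[C]]).Sentence :=
  letI t : Fin q.1.1 → (L[[C]]).Term Empty := fun i => (L.con (u (q.2 i))).term
  if Structure.RelMap q.1.2 q.2 then
    Relations.formula (Sum.inl q.1.2 : (L[[C]]).Relations q.1.1) t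
  else ∼(Relations.formula (Sum.inl q.1.2 : (L[[C]]).Relations q.1.1) t)

lemma realize_relSent {Q : Type*} [(L[[C]]).Structure Q] (u : M → C)
    (q : Σ p : (Σ m, L.Relations m), (Fin p.1 → M)) :
    Q ⊨ relSent (L := L) u q ↔
      ((@Structure.RelMap (L[[C]]) Q _ q.1.1 (Sum.inl q.1.2))
          (fun i => conMap (L := L) Q (u (q.2 i))) ↔ Structure.RelMap q.1.2 q.2) := by
  rw [relSent]
  split_ifs with h
  · simp only [Sentence.Realize, Formula.realize_rel, conMap]
    exact ⟨fun h' => iff_of_true (Formula.realize_rel.1 h') h, fun h' => Formula.realize_rel.2 (h'.2 h)⟩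
  · simp only [Sentence.Realize, Formula.realize_not, Formula.realize_rel, conMap]
    exact ⟨fun h' => iff_of_false (fun h'' => h' (Formula.realize_rel.2 h'')) h, fun h' h'' => h (h'.1 (Formula.realize_rel.1 h''))⟩

end Sent
section Extract

lemma exists_finset_of_subset_range {γ ι : Type*} {h : ι → γ} {T₀ : Set γ}
    (hfin : T₀.Finite) (hsub : T₀ ⊆ Set.range h) : ∃ s : Finset ι, T₀ ⊆ h '' ↑s := by
  classical
  have hch : ∀ t : T₀, ∃ i, h i = t := fun t => hsub t.2
  choose F hF using hch
  haveI := hfin.fintype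
  refine ⟨Finset.univ.image F, fun t ht => ⟨F ⟨t, ht⟩, ?_, hF ⟨t, ht⟩⟩⟩
  simp

end Extract

section Main

variable [L.IsRelational] [Finite L.Symbols]
variable (K : Set (Bundled.{0} L.Structure)) [IsFraisse K]
variable (Z X Y : Bundled.{0} L.Structure) (f : Z ↪[L] X) (g : Z ↪[L] Y)

/-- The amalgamation theory. -/
noncomputable def TT : (L[[(X : Type) ⊕ (Y : Type)]]).Theory :=
  Set.range (fun p : Σ n, L.Structure (Fin n) =>
      (L.lhomWithConstants ((X : Type) ⊕ (Y : Type))).onSentence (forbid L K p)) ∪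
  Set.range (fun z : Z => eqSent (L := L) (C := (X : Type) ⊕ (Y : Type)) (Sum.inl (f z)) (Sum.inr (g z))) ∪
  Set.range (pairSent (L := L) (M := (X : Type)) (C := (X : Type) ⊕ (Y : Type)) Sum.inl) ∪
  Set.range (relSent (L := L) (M := (X : Type)) (C := (X : Type) ⊕ (Y : Type)) Sum.inl) ∪
  Set.range (pairSent (L := L) (M := (Y : Type)) (C := (X : Type) ⊕ (Y : Type)) Sum.inr) ∪
  Set.range (relSent (L := L) (M := (Y : Type)) (C := (X : Type) ⊕ (Y : Type)) Sum.inr)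

lemma master (hZK : L.age Z ⊆ K) (hXK : L.age X ⊆ K) (hYK : L.age Y ⊆ K)
    (Z₀ : Finset Z) (A' : Finset X) (B' : Finset Y)
    (hfA : ∀ z ∈ Z₀, f z ∈ A') (hgB : ∀ z ∈ Z₀, g z ∈ B')
    (hQne : A'.Nonempty ∨ B'.Nonempty) :
    ∃ Q : Bundled.{0} (L[[(X : Type) ⊕ (Y : Type)]]).Structure, Nonempty Q ∧
      (∀ p : Σ n, L.Structure (Fin n),
        Q ⊨ (L.lhomWithConstants ((X : Type) ⊕ (Y : Type))).onSentence (forbid L K p)) ∧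
      (∀ z ∈ Z₀, Q ⊨ eqSent (L := L) (C := (X : Type) ⊕ (Y : Type)) (Sum.inl (f z)) (Sum.inr (g z))) ∧
      (∀ p : (↥X × ↥X), p.1 ∈ A' → p.2 ∈ A' →
        Q ⊨ pairSent (L := L) (M := (X : Type)) (C := (X : Type) ⊕ (Y : Type)) Sum.inl p) ∧
      (∀ q : Σ p : (Σ m, L.Relations m), (Fin p.1 → (X : Type)), (∀ i, q.2 i ∈ A') →
        Q ⊨ relSent (L := L) (M := (X : Type)) (C := (X : Type) ⊕ (Y : Type)) Sum.inl q) ∧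
      (∀ p : (↥Y × ↥Y), p.1 ∈ B' → p.2 ∈ B' →
        Q ⊨ pairSent (L := L) (M := (Y : Type)) (C := (X : Type) ⊕ (Y : Type)) Sum.inr p) ∧
      (∀ q : Σ p : (Σ m, L.Relations m), (Fin p.1 → (Y : Type)), (∀ i, q.2 i ∈ B') →
        Q ⊨ relSent (L := L) (M := (Y : Type)) (C := (X : Type) ⊕ (Y : Type)) Sum.inr q) := by
  classical
  set SC : L.Substructure Z := setSub (↑Z₀) with hSC
  set SA : L.Substructure X := setSub (↑A') with hSA
  set SB : L.Substructure Y := setSub (↑B') with hSB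
  haveI : Finite SC := Set.Finite.to_subtype (Z₀.finite_toSet)
  haveI : Finite SA := Set.Finite.to_subtype (A'.finite_toSet)
  haveI : Finite SB := Set.Finite.to_subtype (B'.finite_toSet)
  have hCK : Bundled.mk SC ∈ K := hZK (age.fg_substructure (Substructure.fg_iff_finite.2 ‹_›))
  have hAK : Bundled.mk SA ∈ K := hXK (age.fg_substructure (Substructure.fg_iff_finite.2 ‹_›))
  have hBK : Bundled.mk SB ∈ K := hYK (age.fg_substructure (Substructure.fg_iff_finite.2 ‹_›))
  let i : (↥SC) ↪[L] (↥SA) :=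
    FirstOrder.Language.Embedding.codRestrict SA (f.comp SC.subtype) (fun c => hfA c.1 c.2)
  let j : (↥SC) ↪[L] (↥SB) :=
    FirstOrder.Language.Embedding.codRestrict SB (g.comp SC.subtype) (fun c => hgB c.1 c.2)
  obtain ⟨Q0, αe, βe, hQ0K, hcomm⟩ :=
    IsFraisse.amalgamation (K := K) (Bundled.mk (↥SC)) (Bundled.mk (↥SA)) (Bundled.mk (↥SB)) i j
      hCK hAK hBK
  haveI hQ0ne : Nonempty Q0 := by
    rcases hQne with ⟨x, hx⟩ | ⟨y, hy⟩
    · exact ⟨αe ⟨x, hx⟩⟩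
    · exact ⟨βe ⟨y, hy⟩⟩
  let cval : (X : Type) ⊕ (Y : Type) → Q0 :=
    Sum.elim (fun x => if h : x ∈ A' then αe ⟨x, h⟩ else Classical.arbitrary Q0)
      (fun y => if h : y ∈ B' then βe ⟨y, h⟩ else Classical.arbitrary Q0)
  letI : (constantsOn ((X : Type) ⊕ (Y : Type))).Structure Q0 := constantsOn.structure cval
  have hcon : ∀ a, conMap (L := L) Q0 a = cval a := fun a => by
    simp only [conMap]
    rw [Term.realize_constants]
    rfl
  refine ⟨Bundled.mk (↥Q0) inferInstance, inferInstance, ?_, ?_, ?_, ?_, ?_, ?_⟩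
  · intro p
    rw [LHom.realize_onSentence]
    exact forbid_realize_of_age (IsFraisse.hereditary (K := K) Q0 hQ0K) p
  · intro z hz
    rw [realize_eqSent]
    simp only [hcon]
    have h1 : cval (Sum.inl (f z)) = αe ⟨f z, hfA z hz⟩ := by
      simp only [cval, Sum.elim_inl, dif_pos (hfA z hz)]
    have h2 : cval (Sum.inr (g z)) = βe ⟨g z, hgB z hz⟩ := by
      simp only [cval, Sum.elim_inr, dif_pos (hgB z hz)]
    rw [h1, h2]
    have := congr_fun (congrArg DFunLike.coe hcomm) (⟨z, hz⟩ : SC)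
    exact this
  · intro p h1 h2
    rw [realize_pairSent]
    intro hne
    simp only [hcon]
    simp only [cval, Sum.elim_inl, dif_pos h1, dif_pos h2]
    intro heq
    exact hne (congrArg Subtype.val (αe.injective heq))
  · intro q hq
    rw [realize_relSent, withConstants_relMap_sumInl (L := L) (α := (X : Type) ⊕ (Y : Type))]
    have hv : (fun i => conMap (L := L) (C := (X : Type) ⊕ (Y : Type)) Q0 (Sum.inl (q.2 i))) =
        (fun i => αe ⟨q.2 i, hq i⟩) := by
      funext i
      simp only [hcon]
      simp only [cval, Sum.elim_inl, dif_pos (hq i)]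
    rw [hv]
    exact (αe.map_rel' q.1.2 (fun i => ⟨q.2 i, hq i⟩))
  · intro p h1 h2
    rw [realize_pairSent]
    intro hne
    simp only [hcon]
    simp only [cval, Sum.elim_inr, dif_pos h1, dif_pos h2]
    intro heq
    exact hne (congrArg Subtype.val (βe.injective heq))
  · intro q hq
    rw [realize_relSent, withConstants_relMap_sumInl (L := L) (α := (X : Type) ⊕ (Y : Type))]
    have hv : (fun i => conMap (L := L) (C := (X : Type) ⊕ (Y : Type)) Q0 (Sum.inr (q.2 i))) =
        (fun i => βe ⟨q.2 i, hq i⟩) := by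
      funext i
      simp only [hcon]
      simp only [cval, Sum.elim_inr, dif_pos (hq i)]
    rw [hv]
    exact (βe.map_rel' q.1.2 (fun i => ⟨q.2 i, hq i⟩))

lemma TT_isSat (hZK : L.age Z ⊆ K) (hXK : L.age X ⊆ K) (hYK : L.age Y ⊆ K)
    (hne : Nonempty ((X : Type) ⊕ (Y : Type))) :
    (TT K Z X Y f g).IsSatisfiable := by
  rw [Theory.isSatisfiable_iff_isFinitelySatisfiable]
  intro T0 hT0
  classical
  obtain ⟨sE, hsE⟩ := exists_finset_of_subset_range
    (h := fun z : Z =>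
      eqSent (L := L) (C := (X : Type) ⊕ (Y : Type)) (Sum.inl (f z)) (Sum.inr (g z)))
    ((T0.finite_toSet).inter_of_left _) Set.inter_subset_right
  obtain ⟨sPX, hsPX⟩ := exists_finset_of_subset_range
    (h := pairSent (L := L) (M := (X : Type)) (C := (X : Type) ⊕ (Y : Type)) Sum.inl)
    ((T0.finite_toSet).inter_of_left _) Set.inter_subset_right
  obtain ⟨sRX, hsRX⟩ := exists_finset_of_subset_range
    (h := relSent (L := L) (M := (X : Type)) (C := (X : Type) ⊕ (Y : Type)) Sum.inl)
    ((T0.finite_toSet).inter_of_left _) Set.inter_subset_right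
  obtain ⟨sPY, hsPY⟩ := exists_finset_of_subset_range
    (h := pairSent (L := L) (M := (Y : Type)) (C := (X : Type) ⊕ (Y : Type)) Sum.inr)
    ((T0.finite_toSet).inter_of_left _) Set.inter_subset_right
  obtain ⟨sRY, hsRY⟩ := exists_finset_of_subset_range
    (h := relSent (L := L) (M := (Y : Type)) (C := (X : Type) ⊕ (Y : Type)) Sum.inr)
    ((T0.finite_toSet).inter_of_left _) Set.inter_subset_right
  set A0 : Finset X := ((sPX.image Prod.fst ∪ sPX.image Prod.snd) ∪
      sRX.biUnion (fun q => Finset.univ.image q.2)) ∪ sE.image (fun z => f z) with hA0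
  set B0 : Finset Y := ((sPY.image Prod.fst ∪ sPY.image Prod.snd) ∪
      sRY.biUnion (fun q => Finset.univ.image q.2)) ∪ sE.image (fun z => g z) with hB0
  obtain ⟨A1, B1, hA1, hB1, hne'⟩ :
      ∃ (A1 : Finset X) (B1 : Finset Y), A0 ⊆ A1 ∧ B0 ⊆ B1 ∧
        (A1.Nonempty ∨ B1.Nonempty) := by
    rcases hne with ⟨x⟩ | ⟨y⟩
    · exact ⟨insert x A0, B0, Finset.subset_insert _ _, le_refl _,
        Or.inl ⟨x, Finset.mem_insert_self _ _⟩⟩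
    · exact ⟨A0, insert y B0, le_refl _, Finset.subset_insert _ _,
        Or.inr ⟨y, Finset.mem_insert_self _ _⟩⟩
  obtain ⟨Q, hQne, hforb, heq, hpx, hrx, hpy, hry⟩ :=
    master K Z X Y f g hZK hXK hYK sE A1 B1
      (fun z hz => hA1 (Finset.mem_union_right _ (Finset.mem_image_of_mem _ hz)))
      (fun z hz => hB1 (Finset.mem_union_right _ (Finset.mem_image_of_mem _ hz)))
      hne'
  haveI : Nonempty Q := hQne
  haveI : (Q : Type) ⊨ (↑T0 : (L[[(X : Type) ⊕ (Y : Type)]]).Theory) := by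
    rw [Theory.model_iff]
    intro φ hφ
    have hmem := hT0 hφ
    rw [TT] at hmem
    rcases hmem with ((((hm | hm) | hm) | hm) | hm) | hm
    · obtain ⟨p, rfl⟩ := hm
      exact hforb p
    · obtain ⟨z, hz, rfl⟩ := hsE ⟨hφ, hm⟩
      exact heq z (Finset.mem_coe.1 hz)
    · obtain ⟨p, hp, rfl⟩ := hsPX ⟨hφ, hm⟩
      refine hpx p (hA1 ?_) (hA1 ?_)
      · exact Finset.mem_union_left _ (Finset.mem_union_left _
          (Finset.mem_union_left _ (Finset.mem_image_of_mem _ (Finset.mem_coe.1 hp))))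
      · exact Finset.mem_union_left _ (Finset.mem_union_left _
          (Finset.mem_union_right _ (Finset.mem_image_of_mem _ (Finset.mem_coe.1 hp))))
    · obtain ⟨q, hq, rfl⟩ := hsRX ⟨hφ, hm⟩
      refine hrx q (fun i => hA1 ?_)
      exact Finset.mem_union_left _ (Finset.mem_union_right _
        (Finset.mem_biUnion.2 ⟨q, Finset.mem_coe.1 hq,
          Finset.mem_image.2 ⟨i, Finset.mem_univ _, rfl⟩⟩))
    · obtain ⟨p, hp, rfl⟩ := hsPY ⟨hφ, hm⟩
      refine hpy p (hB1 ?_) (hB1 ?_)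
      · exact Finset.mem_union_left _ (Finset.mem_union_left _
          (Finset.mem_union_left _ (Finset.mem_image_of_mem _ (Finset.mem_coe.1 hp))))
      · exact Finset.mem_union_left _ (Finset.mem_union_left _
          (Finset.mem_union_right _ (Finset.mem_image_of_mem _ (Finset.mem_coe.1 hp))))
    · obtain ⟨q, hq, rfl⟩ := hsRY ⟨hφ, hm⟩
      refine hry q (fun i => hB1 ?_)
      exact Finset.mem_union_left _ (Finset.mem_union_right _
        (Finset.mem_biUnion.2 ⟨q, Finset.mem_coe.1 hq,
          Finset.mem_image.2 ⟨i, Finset.mem_univ _, rfl⟩⟩))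
  exact Theory.Model.isSatisfiable (Q : Type)

end Main

end Statement12

open Statement12

/-- If `K` is a Fraïssé class in a finite relational language, then the class
of countable structures with age contained in `K` has the amalgamation property. -/
theorem statement12 (L : FirstOrder.Language.{0, 0}) [L.IsRelational] [Finite L.Symbols]
    (K : Set (Bundled.{0} L.Structure)) [IsFraisse K]
    (Z X Y : Bundled.{0} L.Structure)
    (hZ : Countable Z) (hX : Countable X) (hY : Countable Y)
    (hZK : L.age Z ⊆ K) (hXK : L.age X ⊆ K) (hYK : L.age Y ⊆ K)
    (f : Z ↪[L] X) (g : Z ↪[L] Y) :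
    ∃ W : Bundled.{0} L.Structure, Countable W ∧ L.age W ⊆ K ∧
      ∃ (f' : X ↪[L] W) (g' : Y ↪[L] W), f'.comp f = g'.comp g := by
  classical
  obtain he | hne := isEmpty_or_nonempty ((X : Type) ⊕ (Y : Type))
  · haveI hXe : IsEmpty (X : Type) := ⟨fun x => he.false (Sum.inl x)⟩
    haveI hYe : IsEmpty (Y : Type) := ⟨fun y => he.false (Sum.inr y)⟩
    haveI hZe : IsEmpty (Z : Type) := ⟨fun z => he.false (Sum.inl (f z))⟩
    have hZm : Z ∈ K := hZK ⟨Structure.fg_iff_finite.2 inferInstance, ⟨Embedding.refl L Z⟩⟩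
    have hXm : X ∈ K := hXK ⟨Structure.fg_iff_finite.2 inferInstance, ⟨Embedding.refl L X⟩⟩
    have hYm : Y ∈ K := hYK ⟨Structure.fg_iff_finite.2 inferInstance, ⟨Embedding.refl L Y⟩⟩
    obtain ⟨Q, f', g', hQK, hcomm⟩ := IsFraisse.amalgamation (K := K) Z X Y f g hZm hXm hYm
    haveI : Finite Q := (IsFraisse.FG (K := K) Q hQK).finite
    exact ⟨Q, inferInstance, IsFraisse.hereditary (K := K) Q hQK, f', g', hcomm⟩
  · haveI := hX; haveI := hY
    obtain ⟨N⟩ := TT_isSat K Z X Y f g hZK hXK hYK hne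
    letI : L.Structure N := (L.lhomWithConstants ((X : Type) ⊕ (Y : Type))).reduct N
    haveI : (L.lhomWithConstants ((X : Type) ⊕ (Y : Type))).IsExpansionOn (N : Type) :=
      LHom.isExpansionOn_reduct _ _
    let h0 : (X : Type) ⊕ (Y : Type) → N :=
      fun a => conMap (L := L) (C := (X : Type) ⊕ (Y : Type)) (N : Type) a
    let S : L.Substructure N := setSub (Set.range h0)
    have hrealize : ∀ φ ∈ TT K Z X Y f g, (N : Type) ⊨ φ :=
      fun φ hφ => Theory.realize_sentence_of_mem (TT K Z X Y f g) hφ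
    have hforbN : ∀ p : Σ n, L.Structure (Fin n),
        (N : Type) ⊨ (L.lhomWithConstants ((X : Type) ⊕ (Y : Type))).onSentence
          (forbid L K p) := fun p => hrealize _ (Set.mem_union_left _ (Set.mem_union_left _
        (Set.mem_union_left _ (Set.mem_union_left _ (Set.mem_union_left _ ⟨p, rfl⟩)))))
    have heqN : ∀ z : Z, h0 (Sum.inl (f z)) = h0 (Sum.inr (g z)) := fun z =>
      (realize_eqSent _ _).1 (hrealize _ (Set.mem_union_left _ (Set.mem_union_left _
        (Set.mem_union_left _ (Set.mem_union_left _ (Set.mem_union_right _ ⟨z, rfl⟩))))))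
    have hpxN : ∀ p : (↥X × ↥X), p.1 ≠ p.2 → h0 (Sum.inl p.1) ≠ h0 (Sum.inl p.2) := fun p =>
      (realize_pairSent _ _).1 (hrealize _ (Set.mem_union_left _ (Set.mem_union_left _
        (Set.mem_union_left _ (Set.mem_union_right _ ⟨p, rfl⟩)))))
    have hrxN : ∀ q : Σ p : (Σ m, L.Relations m), (Fin p.1 → (X : Type)),
        ((@Structure.RelMap (L[[(X : Type) ⊕ (Y : Type)]]) N _ q.1.1 (Sum.inl q.1.2))
          (fun i => h0 (Sum.inl (q.2 i))) ↔ Structure.RelMap q.1.2 q.2) := fun q =>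
      (realize_relSent _ _).1 (hrealize _ (Set.mem_union_left _ (Set.mem_union_left _
        (Set.mem_union_right _ ⟨q, rfl⟩))))
    have hpyN : ∀ p : (↥Y × ↥Y), p.1 ≠ p.2 → h0 (Sum.inr p.1) ≠ h0 (Sum.inr p.2) := fun p =>
      (realize_pairSent _ _).1 (hrealize _ (Set.mem_union_left _
        (Set.mem_union_right _ ⟨p, rfl⟩)))
    have hryN : ∀ q : Σ p : (Σ m, L.Relations m), (Fin p.1 → (Y : Type)),
        ((@Structure.RelMap (L[[(X : Type) ⊕ (Y : Type)]]) N _ q.1.1 (Sum.inl q.1.2))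
          (fun i => h0 (Sum.inr (q.2 i))) ↔ Structure.RelMap q.1.2 q.2) := fun q =>
      (realize_relSent _ _).1 (hrealize _ (Set.mem_union_right _ ⟨q, rfl⟩))
    refine ⟨Bundled.mk (↥S) inferInstance, ?_, ?_, ?_⟩
    · have hsurj : Function.Surjective
          (fun a : (X : Type) ⊕ (Y : Type) => (⟨h0 a, ⟨a, rfl⟩⟩ : ↥S)) := by
        rintro ⟨x, a, rfl⟩
        exact ⟨a, rfl⟩
      exact hsurj.countable
    · apply age_subset_of (K := K)
      intro n s hs
      obtain ⟨e⟩ := hs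
      apply mem_of_forbid (M := (N : Type)) ⟨n, s⟩
      · have := hforbN ⟨n, s⟩
        rwa [LHom.realize_onSentence] at this
      · exact ⟨S.subtype.comp e⟩
    · refine ⟨mkEmb L (fun x => ⟨h0 (Sum.inl x), ⟨_, rfl⟩⟩) ?_ ?_,
        mkEmb L (fun y => ⟨h0 (Sum.inr y), ⟨_, rfl⟩⟩) ?_ ?_, ?_⟩
      · intro x1 x2 hx
        by_contra hne'
        exact hpxN (x1, x2) hne' (congrArg Subtype.val hx)
      · intro n R v
        exact hrxN ⟨⟨n, R⟩, v⟩
      · intro y1 y2 hy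
        by_contra hne'
        exact hpyN (y1, y2) hne' (congrArg Subtype.val hy)
      · intro n R v
        exact hryN ⟨⟨n, R⟩, v⟩
      · apply FirstOrder.Language.Embedding.ext
        intro z
        exact Subtype.ext (heqN z)
end

section
/- Let a, b : ℕ → ℕ be the permutations of ℕ defined by a(2k) = 2k+1 and a(2k+1) = 2k for all k ∈ ℕ, and b(0) = 0, b(2k−1) = 2k and b(2k) = 2k−1 for all k ≥ 1. Let G be the subgroup of the symmetric group of ℕ consisting of all permutations with finite support (i.e., moving only finitely many points). Then: (1) the subgroup generated by G ∪ {a} is locally finite, i.e., every finitely generated subgroup of it is finite; (2) the subgroup generated by G ∪ {b} is locally finite; (3) the composition a ∘ b has infinite order in the symmetric group of ℕ. -/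
open Equiv Subgroup

lemma myaux (c : Equiv.Perm ℕ) (hc2 : c * c = 1)
    (hfix : {n : ℕ | c n = n}.Finite)
    (G : Subgroup (Equiv.Perm ℕ))
    (hG : ∀ f : Equiv.Perm ℕ, f ∈ G ↔ {n : ℕ | f n ≠ n}.Finite)
    (H : Subgroup (Equiv.Perm ℕ))
    (hH : H ≤ Subgroup.closure (↑G ∪ {c}))
    (hFG : H.FG) : Finite H := by
  classical
  have hcc : ∀ n, c (c n) = n := by
    intro n
    have h := Equiv.ext_iff.mp hc2 n
    simpa using h
  have hconj : ∀ g ∈ G, c * g * c ∈ G := by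
    intro g hg
    rw [hG] at hg ⊢
    have hsub : {n | (c * g * c) n ≠ n} ⊆ c ⁻¹' {n | g n ≠ n} := by
      intro n hn
      simp only [Set.mem_preimage, Set.mem_setOf_eq] at *
      intro h
      apply hn
      show c (g (c n)) = n
      rw [h, hcc]
    exact (hg.preimage (c.injective.injOn)).subset hsub
  have hcinv : c⁻¹ = c := by
    rw [inv_eq_iff_mul_eq_one, hc2]
  -- the subgroup K of elements of the form g * c^e
  have hid1 : ∀ f f' : Equiv.Perm ℕ, f * c * (c * f' * c) = f * (c * c) * (f' * c) := by
    intros; group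
  have hid2 : ∀ f f' : Equiv.Perm ℕ, f * c * (c * (f' * c) * c) = f * (c * c) * f' * (c * c) := by
    intros; group
  let K : Subgroup (Equiv.Perm ℕ) :=
  { carrier := {f | f ∈ G ∨ f * c ∈ G}
    one_mem' := Or.inl G.one_mem
    mul_mem' := by
      rintro f f' (hf | hf) (hf' | hf')
      · exact Or.inl (G.mul_mem hf hf')
      · exact Or.inr (by rw [mul_assoc]; exact G.mul_mem hf hf')
      · refine Or.inr ?_
        have h := G.mul_mem hf (hconj f' hf')
        rw [hid1, hc2, mul_one] at h
        rwa [mul_assoc]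
      · refine Or.inl ?_
        have h := G.mul_mem hf (hconj _ hf')
        rwa [hid2, hc2, mul_one, mul_one] at h
    inv_mem' := by
      rintro f (hf | hf)
      · exact Or.inl (G.inv_mem hf)
      · refine Or.inr ?_
        have h := hconj _ (G.inv_mem hf)
        rw [mul_inv_rev, hcinv] at h
        have e : c * (c * f⁻¹) * c = (c * c) * (f⁻¹ * c) := by group
        rwa [e, hc2, one_mul] at h }
  have hK : Subgroup.closure (↑G ∪ {c}) ≤ K := by
    rw [Subgroup.closure_le]
    rintro f (hf | hf)
    · exact Or.inl hf
    · rcases hf with rfl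
      exact Or.inr (by rw [hc2]; exact G.one_mem)
  obtain ⟨S, hS⟩ := hFG
  set gOf : Equiv.Perm ℕ → Equiv.Perm ℕ := fun s => if s ∈ G then s else s * c with hgOf
  have hsK : ∀ s ∈ (S : Set (Equiv.Perm ℕ)), s ∈ K := by
    intro s hs
    exact hK (hH (hS ▸ Subgroup.subset_closure hs))
  have hg : ∀ s ∈ (S : Set (Equiv.Perm ℕ)), gOf s ∈ G := by
    intro s hs
    by_cases h : s ∈ G
    · simpa [hgOf, h] using h
    · rcases hsK s hs with h' | h'
      · exact absurd h' h
      · simpa [hgOf, h] using h'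
  have hsform : ∀ s ∈ (S : Set (Equiv.Perm ℕ)), s = gOf s ∨ s = gOf s * c := by
    intro s hs
    by_cases h : s ∈ G
    · left; simp [hgOf, h]
    · right; simp [hgOf, h, mul_assoc, hc2]
  set U : Set ℕ := ⋃ s ∈ (S : Set (Equiv.Perm ℕ)), {n | gOf s n ≠ n} with hUdef
  have hU : U.Finite :=
    Set.Finite.biUnion S.finite_toSet (fun s hs => (hG _).mp (hg s hs))
  set T : Set ℕ := U ∪ c '' U with hTdef
  have hT : T.Finite := hU.union (hU.image c)
  have hUT : U ⊆ T := Set.subset_union_left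
  have hcT : ∀ n ∈ T, c n ∈ T := by
    rintro n (hn | ⟨m, hm, rfl⟩)
    · exact Or.inr ⟨n, hn, rfl⟩
    · rw [hcc]; exact hUT hm
  have hcT' : ∀ n, n ∉ T → c n ∉ T := by
    intro n hn hmem
    exact hn (by simpa [hcc] using hcT _ hmem)
  have hgmem : ∀ s ∈ (S : Set (Equiv.Perm ℕ)), ∀ n ∈ T, gOf s n ∈ T := by
    intro s hs n hn
    by_cases h : gOf s n = n
    · rwa [h]
    · apply hUT
      apply Set.mem_biUnion hs
      show gOf s (gOf s n) ≠ gOf s n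
      intro h'
      exact h ((gOf s).injective h')
  have hgout : ∀ s ∈ (S : Set (Equiv.Perm ℕ)), ∀ n, n ∉ T → gOf s n = n := by
    intro s hs n hn
    by_contra h
    exact hn (hUT (Set.mem_biUnion hs h))
  have hsT : ∀ s ∈ (S : Set (Equiv.Perm ℕ)), ∀ n ∈ T, s n ∈ T := by
    intro s hs n hn
    rcases hsform s hs with h | h
    · rw [h]; exact hgmem s hs n hn
    · rw [h]
      show gOf s (c n) ∈ T
      exact hgmem s hs _ (hcT n hn)
  have hsout : ∀ s ∈ (S : Set (Equiv.Perm ℕ)),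
      (∀ n, n ∉ T → s n = n) ∨ (∀ n, n ∉ T → s n = c n) := by
    intro s hs
    rcases hsform s hs with h | h
    · left; intro n hn; rw [h]; exact hgout s hs n hn
    · right; intro n hn; rw [h]
      show gOf s (c n) = c n
      exact hgout s hs _ (hcT' n hn)
  let P : Subgroup (Equiv.Perm ℕ) :=
  { carrier := {f | (∀ n ∈ T, f n ∈ T) ∧
      ((∀ n, n ∉ T → f n = n) ∨ (∀ n, n ∉ T → f n = c n))}
    one_mem' := ⟨fun n hn => hn, Or.inl fun n _ => rfl⟩
    mul_mem' := by
      rintro f f' ⟨hf1, hf2⟩ ⟨hf'1, hf'2⟩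
      refine ⟨fun n hn => hf1 _ (hf'1 n hn), ?_⟩
      rcases hf2 with h2 | h2 <;> rcases hf'2 with h2' | h2'
      · left; intro n hn; show f (f' n) = n; rw [h2' n hn, h2 n hn]
      · right; intro n hn; show f (f' n) = c n
        rw [h2' n hn, h2 _ (hcT' n hn)]
      · right; intro n hn; show f (f' n) = c n
        rw [h2' n hn, h2 n hn]
      · left; intro n hn; show f (f' n) = n
        rw [h2' n hn, h2 _ (hcT' n hn), hcc]
    inv_mem' := by
      rintro f ⟨hf1, hf2⟩
      have hfo : ∀ n, n ∉ T → f n ∉ T := by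
        intro n hn
        rcases hf2 with h | h
        · rw [h n hn]; exact hn
        · rw [h n hn]; exact hcT' n hn
      have hinv_out : ∀ n, n ∉ T → f⁻¹ n ∉ T := by
        intro n hn hmem
        have := hf1 _ hmem
        simp only [Equiv.Perm.coe_inv, Equiv.apply_symm_apply] at this
        exact hn this
      refine ⟨?_, ?_⟩
      · intro n hn
        by_contra h
        have := hfo _ h
        simp only [Equiv.Perm.coe_inv, Equiv.apply_symm_apply] at this
        exact this hn
      · rcases hf2 with h | h
        · left; intro n hn
          have hm := hinv_out n hn
          have := h _ hm
          simp only [Equiv.Perm.coe_inv, Equiv.apply_symm_apply] at this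
          exact this.symm
        · right; intro n hn
          have hm := hinv_out n hn
          have := h _ hm
          simp only [Equiv.Perm.coe_inv, Equiv.apply_symm_apply] at this
          have h2 := congrArg c this
          rw [hcc] at h2
          exact h2.symm }
  have hHP : H ≤ P := by
    rw [← hS, Subgroup.closure_le]
    intro s hs
    exact ⟨hsT s hs, hsout s hs⟩
  have hP : ∀ f ∈ P, (∀ n ∈ T, f n ∈ T) ∧
      ((∀ n, n ∉ T → f n = n) ∨ (∀ n, n ∉ T → f n = c n)) := fun f hf => hf
  obtain ⟨n₀, hn₀⟩ := ((hT.union hfix).infinite_compl).nonempty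
  simp only [Set.mem_compl_iff, Set.mem_union, Set.mem_setOf_eq, not_or] at hn₀
  obtain ⟨hn₀T, hn₀c⟩ := hn₀
  set V : Set ℕ := {n₀, c n₀} with hVdef
  haveI : Finite V := (Set.toFinite V).to_subtype
  haveI : Finite T := hT.to_subtype
  have hval : ∀ h : H, (h : Equiv.Perm ℕ) n₀ ∈ V := by
    intro h
    rcases (hP _ (hHP h.2)).2 with hh | hh
    · rw [hh n₀ hn₀T]; exact Set.mem_insert _ _
    · rw [hh n₀ hn₀T]; exact Set.mem_insert_of_mem _ rfl
  let φ : H → (T → T) × V := fun h =>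
    (fun t => ⟨(h : Equiv.Perm ℕ) t.1, (hP _ (hHP h.2)).1 t.1 t.2⟩, ⟨(h : Equiv.Perm ℕ) n₀, hval h⟩)
  have hinj : Function.Injective φ := by
    intro h h' heq
    have h1 : ∀ n ∈ T, (h : Equiv.Perm ℕ) n = (h' : Equiv.Perm ℕ) n := by
      intro n hn
      have := congrFun (congrArg Prod.fst heq) ⟨n, hn⟩
      exact Subtype.ext_iff.mp this
    have h2 : (h : Equiv.Perm ℕ) n₀ = (h' : Equiv.Perm ℕ) n₀ :=
      Subtype.ext_iff.mp (congrArg Prod.snd heq)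
    apply Subtype.ext
    apply Equiv.ext
    intro n
    by_cases hn : n ∈ T
    · exact h1 n hn
    · rcases (hP _ (hHP h.2)).2 with hh | hh <;> rcases (hP _ (hHP h'.2)).2 with hh' | hh'
      · rw [hh n hn, hh' n hn]
      · exfalso; apply hn₀c
        rw [hh n₀ hn₀T, hh' n₀ hn₀T] at h2
        exact h2.symm
      · exfalso; apply hn₀c
        rw [hh n₀ hn₀T, hh' n₀ hn₀T] at h2
        exact h2
      · rw [hh n hn, hh' n hn]
  exact Finite.of_injective φ hinj

/-- Let `a` be the permutation of `ℕ` swapping `2k ↔ 2k+1`, `b` the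
permutation fixing `0` and swapping `2k+1 ↔ 2k+2`, and `G` the subgroup of finitely supported
permutations of `ℕ`. Then the subgroups generated by `G ∪ {a}` and by `G ∪ {b}` are locally
finite, while `a ∘ b` has infinite order. -/
theorem statement16 (a b : Equiv.Perm ℕ)
    (ha : ∀ k : ℕ, a (2 * k) = 2 * k + 1 ∧ a (2 * k + 1) = 2 * k)
    (hb0 : b 0 = 0)
    (hb : ∀ k : ℕ, b (2 * k + 1) = 2 * k + 2 ∧ b (2 * k + 2) = 2 * k + 1)
    (G : Subgroup (Equiv.Perm ℕ))
    (hG : ∀ f : Equiv.Perm ℕ, f ∈ G ↔ {n : ℕ | f n ≠ n}.Finite) :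
    (∀ H : Subgroup (Equiv.Perm ℕ),
        H ≤ Subgroup.closure (↑G ∪ {a}) → H.FG → Finite H) ∧
    (∀ H : Subgroup (Equiv.Perm ℕ),
        H ≤ Subgroup.closure (↑G ∪ {b}) → H.FG → Finite H) ∧
    ¬ IsOfFinOrder (a * b) := by
  have parity : ∀ n : ℕ, (∃ k, n = 2 * k) ∨ (∃ k, n = 2 * k + 1) := by
    intro n
    rcases Nat.even_or_odd n with ⟨k, hk⟩ | ⟨k, hk⟩
    · exact Or.inl ⟨k, by omega⟩
    · exact Or.inr ⟨k, by omega⟩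
  have haa : a * a = 1 := by
    apply Equiv.ext
    intro n
    rcases parity n with ⟨k, rfl⟩ | ⟨k, rfl⟩
    · show a (a (2 * k)) = 2 * k
      rw [(ha k).1, (ha k).2]
    · show a (a (2 * k + 1)) = 2 * k + 1
      rw [(ha k).2, (ha k).1]
  have hbb : b * b = 1 := by
    apply Equiv.ext
    intro n
    rcases parity n with ⟨k, rfl⟩ | ⟨k, rfl⟩
    · rcases Nat.eq_zero_or_pos k with rfl | hk
      · show b (b 0) = 0
        rw [hb0, hb0]
      · have e : 2 * k = 2 * (k - 1) + 2 := by omega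
        rw [e]
        show b (b (2 * (k - 1) + 2)) = 2 * (k - 1) + 2
        rw [(hb (k - 1)).2, (hb (k - 1)).1]
    · show b (b (2 * k + 1)) = 2 * k + 1
      rw [(hb k).1, (hb k).2]
  have hafix : {n : ℕ | a n = n}.Finite := by
    have : {n : ℕ | a n = n} = ∅ := by
      ext n
      simp only [Set.mem_setOf_eq, Set.mem_empty_iff_false, iff_false]
      rcases parity n with ⟨k, rfl⟩ | ⟨k, rfl⟩
      · rw [(ha k).1]; omega
      · rw [(ha k).2]; omega
    rw [this]; exact Set.finite_empty
  have hbfix : {n : ℕ | b n = n}.Finite := by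
    apply Set.Finite.subset (Set.finite_singleton 0)
    intro n hn
    simp only [Set.mem_setOf_eq] at hn
    simp only [Set.mem_singleton_iff]
    by_contra h
    rcases parity n with ⟨k, rfl⟩ | ⟨k, rfl⟩
    · have hk : k ≠ 0 := by omega
      have e : 2 * k = 2 * (k - 1) + 2 := by omega
      rw [e] at hn
      rw [(hb (k - 1)).2] at hn
      omega
    · rw [(hb k).1] at hn; omega
  refine ⟨fun H hH hFG => myaux a haa hafix G hG H hH hFG,
    fun H hH hFG => myaux b hbb hbfix G hG H hH hFG, ?_⟩
  have hpow : ∀ n : ℕ, ((a * b) ^ n) 1 = 2 * n + 1 := by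
    intro n
    induction n with
    | zero => simp
    | succ n ih =>
      rw [pow_succ']
      show (a * b) (((a * b) ^ n) 1) = 2 * (n + 1) + 1
      rw [ih]
      show a (b (2 * n + 1)) = 2 * (n + 1) + 1
      rw [(hb n).1]
      have e : 2 * n + 2 = 2 * (n + 1) := by omega
      rw [e, (ha (n + 1)).1]
  intro hfin
  obtain ⟨n, hn, hpow1⟩ := isOfFinOrder_iff_pow_eq_one.mp hfin
  have := hpow n
  rw [hpow1] at this
  simp at this
  omega
end

section
/- Let ρ : ℕ → ℕ → ℕ be an anti-metric on ℕ. Then there exist functions α, β : ℕ → ℕ extending ρ to anti-metrics ρ_a and ρ_b on ℕ ∪ {a} and ℕ ∪ {b} respectively (where ρ_a(a,n) = α(n) and ρ_b(b,n) = β(n) for n ∈ ℕ, and ρ_a, ρ_b agree with ρ on ℕ) such that this pair of one-point extensions cannot be amalgamated over ℕ: there is no set Z with an anti-metric σ and injective maps i : ℕ ∪ {a} → Z and j : ℕ ∪ {b} → Z that agree on ℕ and satisfy σ(i(x), i(y)) = ρ_a(x, y) for all x, y ∈ ℕ ∪ {a} and σ(j(x), j(y)) = ρ_b(x, y) for all x,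 y ∈ ℕ ∪ {b}. -/
/-- An anti-metric on `X`: a symmetric function vanishing exactly on the diagonal such that
the triangle inequality fails everywhere (for pairwise distinct points, the largest distance
is strictly greater than the sum of the other two). -/
def IsAntimetric {X : Type*} (ρ : X → X → ℕ) : Prop :=
  (∀ x y, ρ x y = ρ y x) ∧ (∀ x y, ρ x y = 0 ↔ x = y) ∧
    ∀ x y z : X, x ≠ y → y ≠ z → x ≠ z →
      ρ x z ≤ ρ x y → ρ z y ≤ ρ x y → ρ x z + ρ z y < ρ x y

/-- The one-point extension of a function `ρ` on `ℕ` by a new point (`none` in `Option ℕ`)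
whose distances to the old points are given by `α`. -/
def extendPoint (ρ : ℕ → ℕ → ℕ) (α : ℕ → ℕ) : Option ℕ → Option ℕ → ℕ
  | some m, some n => ρ m n
  | some n, none => α n
  | none, some n => α n
  | none, none => 0

/-- A fast-growing distance function to a new point. -/
def alph (ρ : ℕ → ℕ → ℕ) : ℕ → ℕ
  | 0 => 1
  | n + 1 => alph ρ n + (Finset.range (n + 1)).sup (fun m => ρ m (n + 1)) + 1

lemma alph_pos (ρ : ℕ → ℕ → ℕ) (n : ℕ) : 0 < alph ρ n := by
  cases n <;> simp [alph]

lemma alph_mono (ρ : ℕ → ℕ → ℕ) : StrictMono (alph ρ) := by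
  apply strictMono_nat_of_lt_succ
  intro n
  simp only [alph]
  omega

lemma alph_tri (ρ : ℕ → ℕ → ℕ) {m n : ℕ} (h : m < n) :
    alph ρ m + ρ m n < alph ρ n := by
  obtain ⟨k, rfl⟩ : ∃ k, n = k + 1 := ⟨n - 1, by omega⟩
  have h1 : alph ρ m ≤ alph ρ k := (alph_mono ρ).monotone (by omega)
  have h2 : ρ m (k + 1) ≤ (Finset.range (k + 1)).sup (fun m => ρ m (k + 1)) :=
    Finset.le_sup (f := fun m => ρ m (k + 1)) (Finset.mem_range.mpr (by omega))
  simp only [alph]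
  omega

lemma ext_anti (ρ : ℕ → ℕ → ℕ) (hρ : IsAntimetric ρ) (α : ℕ → ℕ)
    (hpos : ∀ n, 0 < α n) (hmono : StrictMono α)
    (htri : ∀ m n, m < n → α m + ρ m n < α n) :
    IsAntimetric (extendPoint ρ α) := by
  obtain ⟨hsym, hzero, hanti⟩ := hρ
  refine ⟨?_, ?_, ?_⟩
  · rintro (_ | a) (_ | b) <;> simp [extendPoint, hsym]
  · rintro (_ | a) (_ | b) <;>
      simp [extendPoint, (hpos _).ne', hzero, Option.some_inj]
  · rintro (_ | a) (_ | b) (_ | c) hxy hyz hxz h1 h2 <;>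
      simp_all [extendPoint, Option.some_inj]
    · -- x = none, y = some b, z = some c : goal α c + ρ b c < α b
      rcases lt_trichotomy c b with h | rfl | h
      · have := alph_tri ρ h
        have h3 := htri c b h
        have h4 := hsym c b
        omega
      · exact absurd rfl hyz
      · have := hmono h
        omega
    · -- x = some a, y = none, z = some c : goal ρ a c + α c < α a
      rcases lt_trichotomy c a with h | rfl | h
      · have h3 := htri c a h
        have h4 := hsym a c
        omega
      · exact absurd rfl hxz
      · have := hmono h
        omega
    · -- x = some a, y = some b, z = none : goal α a + α b < ρ a b
      rcases lt_trichotomy a b with h | rfl | h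
      · have h3 := htri a b h
        have h4 := hpos a
        omega
      · exact absurd rfl hxy
      · have h3 := htri b a h
        have h4 := hsym a b
        have h5 := hpos b
        omega

/-- Every anti-metric `ρ` on `ℕ` has two one-point anti-metric extensions
that cannot be amalgamated over `ℕ`. -/
theorem statement17 (ρ : ℕ → ℕ → ℕ) (hρ : IsAntimetric ρ) :
    ∃ α β : ℕ → ℕ,
      IsAntimetric (extendPoint ρ α) ∧ IsAntimetric (extendPoint ρ β) ∧
      ¬ ∃ (Z : Type) (σ : Z → Z → ℕ) (i j : Option ℕ → Z),
          IsAntimetric σ ∧ Function.Injective i ∧ Function.Injective j ∧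
          (∀ n : ℕ, i (some n) = j (some n)) ∧
          (∀ x y : Option ℕ, σ (i x) (i y) = extendPoint ρ α x y) ∧
          (∀ x y : Option ℕ, σ (j x) (j y) = extendPoint ρ β x y) := by
  refine ⟨alph ρ, fun n => alph ρ n + 1, ?_, ?_, ?_⟩
  · exact ext_anti ρ hρ _ (alph_pos ρ) (alph_mono ρ) (fun m n h => alph_tri ρ h)
  · refine ext_anti ρ hρ _ (fun n => Nat.succ_pos _) ?_ ?_
    · intro m n h
      have := alph_mono ρ h
      show alph ρ m + 1 < alph ρ n + 1
      omega
    · intro m n h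
      have := alph_tri ρ (m := m) (n := n) h
      show alph ρ m + 1 + ρ m n < alph ρ n + 1
      omega
  · rintro ⟨Z, σ, i, j, ⟨hssym, hszero, hsanti⟩, hi, hj, hij, hiσ, hjσ⟩
    -- the two new points are distinct
    have hne : i none ≠ j none := by
      intro h
      have h1 : σ (i none) (i (some 0)) = alph ρ 0 := hiσ none (some 0)
      have h2 : σ (j none) (j (some 0)) = alph ρ 0 + 1 := hjσ none (some 0)
      rw [← hij 0, ← h, h1] at h2
      omega
    set d := σ (i none) (j none) with hd
    have hd0 : 0 < d :=
      Nat.pos_of_ne_zero (fun h => hne ((hszero _ _).mp h))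
    have hdα : d ≤ alph ρ d := (alph_mono ρ).le_apply
    -- triangle (j none, i (some d), i none)
    have hne1 : j none ≠ i (some d) := by
      intro h
      rw [hij d] at h
      exact Option.some_ne_none d (hj h).symm
    have hne2 : i (some d) ≠ i none := fun h => Option.some_ne_none d (hi h)
    have key := hsanti (j none) (i (some d)) (i none) hne1 hne2 (Ne.symm hne)
    have e1 : σ (j none) (i none) = d := by rw [hssym]
    have e2 : σ (j none) (i (some d)) = alph ρ d + 1 := by
      rw [hij d]; exact hjσ none (some d)
    have e3 : σ (i none) (i (some d)) = alph ρ d := hiσ none (some d)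
    rw [e1, e2, e3] at key
    have := key (by omega) (by omega)
    omega
end

section
/- There exists an uncountable set X equipped with a linear order < and a symmetric function c : X → X → ℕ with no monochromatic triangle (no pairwise distinct x, y, z ∈ X with c(x,y) = c(y,z) = c(x,z)) that is ultrahomogeneous: for all finite subsets A, B ⊆ X and every bijection φ : A → B that preserves the order and the edge colors (x < y ↔ φ(x) < φ(y) and c(x,y) = c(φ(x),φ(y)) for all x, y ∈ A), there exists a bijection Φ : X → X extending φ that preserves the order and the edge colors. -/
namespace St19

noncomputable section

/-- The underlying set: integer sequences. -/
abbrev XX : Type := ℕ → ℤ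

/-- Lexicographic strict order. -/
def rr (f g : XX) : Prop := ∃ n, (∀ m < n, f m = g m) ∧ f n < g n

/-- First coordinate where `f` and `g` differ. -/
def DD (f g : XX) : ℕ := sInf {n | f n ≠ g n}

lemma ne_exists {f g : XX} (h : f ≠ g) : ∃ n, f n ≠ g n := Function.ne_iff.mp h

lemma DD_mem {f g : XX} (h : f ≠ g) : f (DD f g) ≠ g (DD f g) :=
  Nat.sInf_mem (ne_exists h)

lemma DD_lt {f g : XX} {m : ℕ} (h : m < DD f g) : f m = g m := by
  by_contra hne
  have : DD f g ≤ m := Nat.sInf_le (show m ∈ {n | f n ≠ g n} from hne)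
  omega

lemma DD_unique {f g : XX} {d : ℕ} (h1 : ∀ m < d, f m = g m) (h2 : f d ≠ g d) :
    DD f g = d := by
  have hfg : f ≠ g := fun he => h2 (by rw [he])
  refine le_antisymm (Nat.sInf_le h2) ?_
  by_contra hlt
  push_neg at hlt
  exact DD_mem hfg (h1 _ hlt)

lemma DD_comm (f g : XX) : DD f g = DD g f := by
  unfold DD
  congr 1
  ext n
  exact ne_comm

open Classical in
/-- The coloring. -/
def cc (f g : XX) : ℕ :=
  if f = g then 0 else Nat.pair (DD f g) ((f (DD f g) - g (DD f g)).natAbs)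

lemma cc_symm (f g : XX) : cc f g = cc g f := by
  unfold cc
  by_cases h : f = g
  · simp [h]
  · rw [if_neg h, if_neg (Ne.symm h), DD_comm f g]
    congr 1
    omega

lemma rr_iff {f g : XX} (h : f ≠ g) : rr f g ↔ f (DD f g) < g (DD f g) := by
  constructor
  · rintro ⟨n, hp, hlt⟩
    have hn : n = DD f g := by
      rcases lt_trichotomy n (DD f g) with h1 | h1 | h1
      · exact absurd (DD_lt h1) (ne_of_lt hlt)
      · exact h1
      · exact absurd (hp _ h1) (DD_mem h)
    rwa [hn] at hlt
  · intro hlt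
    exact ⟨DD f g, fun m hm => DD_lt hm, hlt⟩

lemma rr_trichotomous : ∀ f g : XX, rr f g ∨ f = g ∨ rr g f := by
  intro f g
  by_cases h : f = g
  · exact Or.inr (Or.inl h)
  · rcases lt_or_gt_of_ne (DD_mem h) with h1 | h1
    · exact Or.inl ((rr_iff h).mpr h1)
    · refine Or.inr (Or.inr ((rr_iff (Ne.symm h)).mpr ?_))
      rwa [DD_comm g f]

lemma rr_trans : ∀ f g k : XX, rr f g → rr g k → rr f k := by
  rintro f g k ⟨n, hp, hlt⟩ ⟨n', hp', hlt'⟩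
  rcases lt_trichotomy n n' with h1 | h1 | h1
  · exact ⟨n, fun m hm => (hp m hm).trans (hp' m (by omega)),
      by have := hp' n h1; omega⟩
  · subst h1
    exact ⟨n, fun m hm => (hp m hm).trans (hp' m hm), by omega⟩
  · exact ⟨n', fun m hm => (hp m (by omega)).trans (hp' m hm),
      by have := hp n' h1; omega⟩

lemma rr_irrefl : ∀ f : XX, ¬ rr f f := by
  rintro f ⟨n, -, hlt⟩
  omega

/-- Helper for surjectivity: inverse images built by strong recursion. -/
def extFun (s : ℕ → (ℕ → ℤ) → ℤ) (g : ℕ → ℤ) : ℕ → ℤ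
  | n => g n - s n (fun m => if h : m < n then extFun s g m else 0)
  termination_by n => n
  decreasing_by exact h

end

end St19

open St19 in
/-- There exists an uncountable triangle-free ordered complete labeled graph
that is ultrahomogeneous: an uncountable set `X` with a (strict) linear order `r` and a
symmetric coloring `c : X → X → ℕ` with no monochromatic triangle, such that every
order-and-color-preserving bijection between finite subsets of `X` extends to an
order-and-color-preserving bijection of `X` onto itself. -/
theorem statement19 :
    ∃ (X : Type) (r : X → X → Prop) (c : X → X → ℕ),
      IsStrictTotalOrder X r ∧
      ¬ Countable X ∧
      (∀ x y, c x y = c y x) ∧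
      (∀ x y z : X, x ≠ y → y ≠ z → x ≠ z → ¬(c x y = c y z ∧ c x y = c x z)) ∧
      ∀ (A B : Finset X) (φ : ↥A ≃ ↥B),
        (∀ x y : ↥A, r x y ↔ r (φ x) (φ y)) →
        (∀ x y : ↥A, c x y = c (φ x) (φ y)) →
        ∃ Φ : X ≃ X, (∀ a : ↥A, Φ a = φ a) ∧
          (∀ x y : X, r x y ↔ r (Φ x) (Φ y)) ∧
          (∀ x y : X, c x y = c (Φ x) (Φ y)) := by
  classical
  have hsto : IsStrictTotalOrder XX rr :=
    { trichotomous := fun a b h1 h2 => ((rr_trichotomous a b).resolve_left h1).resolve_right h2, trans := rr_trans, irrefl := rr_irrefl }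
  refine ⟨XX, rr, cc, hsto, ?_, cc_symm, ?_, ?_⟩
  · -- uncountability
    intro h
    obtain ⟨e, he⟩ := countable_iff_exists_injective XX |>.mp h
    apply Function.cantor_injective
      (f := fun s : Set ℕ => e (fun n => if n ∈ s then (1 : ℤ) else 0))
    intro s t hst
    have := he hst
    ext n
    have := congrFun this n
    by_cases hn : n ∈ s <;> by_cases hn' : n ∈ t <;> simp_all
  · -- triangle-free
    intro x y z hxy hyz hxz ⟨h1, h2⟩
    rw [cc, cc, if_neg hxy, if_neg hyz] at h1
    rw [cc, cc, if_neg hxy, if_neg hxz] at h2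
    obtain ⟨hd1, hv1⟩ := Nat.pair_eq_pair.mp h1
    obtain ⟨hd2, hv2⟩ := Nat.pair_eq_pair.mp h2
    rw [← hd1] at hv1
    rw [← hd2] at hv2
    have e1 : x (DD x y) ≠ y (DD x y) := DD_mem hxy
    have e2 : y (DD x y) ≠ z (DD x y) := by rw [hd1]; exact DD_mem hyz
    have e3 : x (DD x y) ≠ z (DD x y) := by rw [hd2]; exact DD_mem hxz
    omega
  · -- ultrahomogeneity
    intro A B φ hr hc
    set φ' : ↥A → XX := fun a => ((φ a : ↥B) : XX) with hφ'
    have hφinj : ∀ a b : ↥A, φ' a = φ' b → a = b := fun a b h =>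
      φ.injective (Subtype.ext h)
    -- Key well-definedness lemma
    have K : ∀ (a b : ↥A) (n : ℕ), (∀ m < n, (a : XX) m = (b : XX) m) →
        φ' a n - (a : XX) n = φ' b n - (b : XX) n := by
      intro a b n hpre
      by_cases hab : (a : XX) = (b : XX)
      · have : a = b := Subtype.ext hab
        subst this; rfl
      · have hab' : φ' a ≠ φ' b := fun h => hab (congrArg _ (hφinj a b h))
        have hcab := hc a b
        change cc (a : XX) (b : XX) = cc (φ' a) (φ' b) at hcab
        rw [cc, cc, if_neg hab, if_neg hab'] at hcab
        obtain ⟨hD, habs⟩ := Nat.pair_eq_pair.mp hcab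
        rw [← hD] at habs
        have hd1 : (a : XX) (DD (a : XX) (b : XX)) ≠ (b : XX) (DD (a : XX) (b : XX)) :=
          DD_mem hab
        have hd2 : φ' a (DD (a : XX) (b : XX)) ≠ φ' b (DD (a : XX) (b : XX)) := by
          rw [hD]; exact DD_mem hab'
        have hsign := hr a b
        change rr (a : XX) (b : XX) ↔ rr (φ' a) (φ' b) at hsign
        rw [rr_iff hab, rr_iff hab', ← hD] at hsign
        have heq : (a : XX) (DD (a : XX) (b : XX)) - (b : XX) (DD (a : XX) (b : XX)) =
            φ' a (DD (a : XX) (b : XX)) - φ' b (DD (a : XX) (b : XX)) := by omega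
        have hnd : n ≤ DD (a : XX) (b : XX) := by
          by_contra hlt
          exact hd1 (hpre _ (by omega))
        rcases eq_or_lt_of_le hnd with h | h
        · rw [← h] at heq; omega
        · have p1 : (a : XX) n = (b : XX) n := DD_lt h
          have p2 : φ' a n = φ' b n := DD_lt (by rw [← hD]; exact h)
          rw [p1, p2]
    -- the shift function
    set s : ℕ → XX → ℤ := fun n f =>
      if h : ∃ a : ↥A, ∀ m < n, (a : XX) m = f m
      then φ' h.choose n - (h.choose : XX) n else 0 with hs
    have hs_prefix : ∀ (n : ℕ) (f g : XX), (∀ m < n, f m = g m) → s n f = s n g := by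
      intro n f g hfg
      by_cases h1 : ∃ a : ↥A, ∀ m < n, (a : XX) m = f m
      · have h2 : ∃ a : ↥A, ∀ m < n, (a : XX) m = g m :=
          ⟨h1.choose, fun m hm => (h1.choose_spec m hm).trans (hfg m hm)⟩
        rw [hs]; simp only [dif_pos h1, dif_pos h2]
        exact K _ _ n (fun m hm =>
          (h1.choose_spec m hm).trans ((hfg m hm).trans (h2.choose_spec m hm).symm))
      · have h2 : ¬ ∃ a : ↥A, ∀ m < n, (a : XX) m = g m := by
          rintro ⟨a, ha⟩
          exact h1 ⟨a, fun m hm => (ha m hm).trans (hfg m hm).symm⟩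
        rw [hs]; simp only [dif_neg h1, dif_neg h2]
    have hs_eq : ∀ (a : ↥A) (n : ℕ), s n (a : XX) = φ' a n - (a : XX) n := by
      intro a n
      have h1 : ∃ b : ↥A, ∀ m < n, (b : XX) m = (a : XX) m := ⟨a, fun _ _ => rfl⟩
      rw [hs]; simp only [dif_pos h1]
      exact K _ _ n h1.choose_spec
    set Φ₀ : XX → XX := fun f n => f n + s n f with hΦ₀
    -- prefix transfer
    have hfor : ∀ (n : ℕ) (f g : XX), (∀ m < n, f m = g m) →
        ∀ m < n, Φ₀ f m = Φ₀ g m := by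
      intro n f g hfg m hm
      rw [hΦ₀]; simp only
      rw [hfg m hm, hs_prefix m f g (fun k hk => hfg k (by omega))]
    have hback : ∀ (n : ℕ) (f g : XX), (∀ m < n, Φ₀ f m = Φ₀ g m) →
        ∀ m < n, f m = g m := by
      intro n f g hfg m
      induction m using Nat.strong_induction_on with
      | _ m ih =>
        intro hm
        have hpre : ∀ k < m, f k = g k := fun k hk => ih k hk (by omega)
        have := hfg m hm
        rw [hΦ₀] at this; simp only at this
        rw [hs_prefix m f g hpre] at this
        omega
    have hinj : Function.Injective Φ₀ := by
      intro f g hfg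
      funext n
      exact hback (n + 1) f g (fun m _ => congrFun hfg m) n (by omega)
    have hsurj : Function.Surjective Φ₀ := by
      intro g
      refine ⟨extFun s g, funext fun n => ?_⟩
      rw [hΦ₀]; simp only
      rw [extFun]
      have : s n (fun m => if h : m < n then extFun s g m else 0) = s n (extFun s g) := by
        apply hs_prefix
        intro m hm
        simp [hm]
      rw [this]
      ring
    -- difference preservation at split points
    have hdiff : ∀ (n : ℕ) (f g : XX), (∀ m < n, f m = g m) →
        Φ₀ f n - Φ₀ g n = f n - g n := by
      intro n f g hfg
      rw [hΦ₀]; simp only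
      rw [hs_prefix n f g hfg]
      ring
    have hrr : ∀ f g : XX, rr f g ↔ rr (Φ₀ f) (Φ₀ g) := by
      intro f g
      constructor
      · rintro ⟨n, hp, hlt⟩
        refine ⟨n, hfor n f g hp, ?_⟩
        have := hdiff n f g hp
        omega
      · rintro ⟨n, hp, hlt⟩
        have hp' : ∀ m < n, f m = g m := hback n f g hp
        refine ⟨n, hp', ?_⟩
        have := hdiff n f g hp'
        omega
    have hcc : ∀ f g : XX, cc f g = cc (Φ₀ f) (Φ₀ g) := by
      intro f g
      by_cases h : f = g
      · subst h; simp [cc]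
      · have h' : Φ₀ f ≠ Φ₀ g := fun he => h (hinj he)
        rw [cc, cc, if_neg h, if_neg h']
        set d := DD f g with hd
        have hpre : ∀ m < d, f m = g m := fun m hm => DD_lt hm
        have hD' : DD (Φ₀ f) (Φ₀ g) = d := by
          apply DD_unique (hfor d f g hpre)
          have := hdiff d f g hpre
          have := DD_mem h
          rw [← hd] at this
          omega
        rw [hD']
        have := hdiff d f g hpre
        congr 1
        omega
    refine ⟨Equiv.ofBijective Φ₀ ⟨hinj, hsurj⟩, ?_, hrr, hcc⟩
    intro a
    show Φ₀ (a : XX) = φ' a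
    funext n
    rw [hΦ₀]; simp only
    rw [hs_eq a n]
    ring
end
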